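/- arXiv:2511.03213 — 11 statements merged into one kernel-verified Lean document; each statement's English description precedes it below -/
import Mathlib

section
/- Let P(0)=p, P(1)=1-p and Q(0)=0, Q(1)=1 be distributions on {0,1} with p ∈ [0,1]. Then the Bayes-optimal re-identification success probability in the shuffle game with one P-sample hidden among n-1 Q-samples equals p + (1-p)/n, and therefore the additive advantage β_n(P,Q) - 1/n equals (1 - 1/n)·p, which equals (1 - 1/n) times the total variation distance between P and Q. -/
open scoped Classical BigOperators

/-- Success probability of adversary `A` in the shuffle re-identification game:
each user `i` samples `y i` from distribution `Pvec i`, a uniformly random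
permutation `σ` is applied, the adversary sees the shuffled vector and wins if
it outputs `σ⁻¹ 0` (the shuffled position of user 0, the target). -/
noncomputable def shuffleSuccess {Y : Type*} [Fintype Y] (n : ℕ) [NeZero n]
    (Pvec : Fin n → Y → ℝ) (A : (Fin n → Y) → Fin n) : ℝ :=
  (Nat.factorial n : ℝ)⁻¹ *
    ∑ σ : Equiv.Perm (Fin n), ∑ y : Fin n → Y,
      (∏ i, Pvec i (y i)) * (if A (fun i => y (σ i)) = σ.symm 0 then 1 else 0)

/-- Bayes-optimal success probability `β_n(P,Q)`: user 0 samples from `P`,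
the other `n - 1` users sample i.i.d. from `Q`, and we take the supremum over
all adversaries. -/
noncomputable def betaN {Y : Type*} [Fintype Y] (P Q : Y → ℝ) (n : ℕ) [NeZero n] : ℝ :=
  ⨆ A : (Fin n → Y) → Fin n,
    shuffleSuccess n (fun i => if i = 0 then P else Q) A

namespace Stmt4Aux

variable {n : ℕ} [NeZero n] {p : ℝ}

def avec (n : ℕ) [NeZero n] : Fin n → Fin 2 := fun i => if i = 0 then 0 else 1
def bvec (n : ℕ) : Fin n → Fin 2 := fun _ => 1

lemma avec_ne_bvec : avec n ≠ bvec n := by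
  intro h
  have := congrFun h 0
  simp [avec, bvec] at this

/-- split a sum over all binary vectors supported on two points -/
lemma sum_two (f : (Fin n → Fin 2) → ℝ)
    (h0 : ∀ y, y ≠ avec n → y ≠ bvec n → f y = 0) :
    ∑ y, f y = f (avec n) + f (bvec n) := by
  have key : ∀ y, f y = (if y = avec n then f (avec n) else 0)
      + (if y = bvec n then f (bvec n) else 0) := by
    intro y
    by_cases h1 : y = avec n
    · subst h1; simp [avec_ne_bvec]
    · by_cases h2 : y = bvec n
      · subst h2; simp [Ne.symm (avec_ne_bvec (n := n))]
      · simp [h1, h2, h0 y h1 h2]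
  rw [Finset.sum_congr rfl (fun y _ => key y), Finset.sum_add_distrib]
  simp

def Pvec (n : ℕ) [NeZero n] (p : ℝ) : Fin n → Fin 2 → ℝ :=
  fun i => if i = 0 then (fun y => if y = 0 then p else 1 - p)
    else (fun y => if y = 0 then 0 else 1)

lemma prod_avec : (∏ i, Pvec n p i (avec n i)) = p := by
  rw [Fintype.prod_eq_single 0]
  · simp [Pvec, avec]
  · intro i hi; simp [Pvec, avec, hi]

lemma prod_bvec : (∏ i, Pvec n p i (bvec n i)) = 1 - p := by
  rw [Fintype.prod_eq_single 0]
  · simp [Pvec, bvec]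
  · intro i hi; simp [Pvec, bvec, hi]

lemma prod_other (y : Fin n → Fin 2) (h1 : y ≠ avec n) (h2 : y ≠ bvec n) :
    (∏ i, Pvec n p i (y i)) = 0 := by
  have hex : ∃ i, i ≠ 0 ∧ y i = 0 := by
    by_contra hc
    push_neg at hc
    have hone : ∀ i, i ≠ 0 → y i = 1 := by
      intro i hi
      have := hc i hi
      omega
    have hy0 : y 0 = 0 ∨ y 0 = 1 := by omega
    rcases hy0 with h | h
    · exact h1 (funext fun i => by
        by_cases hi : i = 0
        · subst hi; simpa [avec] using h
        · simp [avec, hi, hone i hi])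
    · exact h2 (funext fun i => by
        by_cases hi : i = 0
        · subst hi; simpa [bvec] using h
        · simp [bvec, hone i hi])
  obtain ⟨i, hi, hyi⟩ := hex
  exact Finset.prod_eq_zero (Finset.mem_univ i) (by simp [Pvec, hi, hyi])

lemma success_eq (A : (Fin n → Fin 2) → Fin n) :
    shuffleSuccess n (Pvec n p) A
      = (Nat.factorial n : ℝ)⁻¹ * ∑ σ : Equiv.Perm (Fin n),
          (p * (if A (fun i => if i = σ.symm 0 then 0 else 1) = σ.symm 0 then 1 else 0)
           + (1 - p) * (if A (fun _ => 1) = σ.symm 0 then 1 else 0)) := by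
  unfold shuffleSuccess
  congr 1
  refine Finset.sum_congr rfl (fun σ _ => ?_)
  rw [sum_two (fun y => (∏ i, Pvec n p i (y i)) *
      (if A (fun i => y (σ i)) = σ.symm 0 then 1 else 0))
      (fun y h1 h2 =>
        show (∏ i, Pvec n p i (y i)) *
          (if A (fun i => y (σ i)) = σ.symm 0 then (1:ℝ) else 0) = 0 by
          rw [prod_other y h1 h2, zero_mul])]
  have ha : (fun i => avec n (σ i)) = (fun i => if i = σ.symm 0 then (0 : Fin 2) else 1) := by
    funext i
    have h : (σ i = 0) = (i = σ.symm 0) := by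
      simp [Equiv.apply_eq_iff_eq_symm_apply]
    simp only [avec, h]
  have hb : (fun i => bvec n (σ i)) = (fun _ : Fin n => (1 : Fin 2)) := rfl
  rw [prod_avec, prod_bvec, ha, hb]

lemma count (c : Fin n) :
    ∑ σ : Equiv.Perm (Fin n), (if c = σ.symm 0 then (1:ℝ) else 0)
      = (Nat.factorial n : ℝ) / n := by
  have hcond : ∀ σ : Equiv.Perm (Fin n), (c = σ.symm 0) = (σ c = 0) := by
    intro σ
    have : c = σ.symm 0 ↔ σ c = 0 := by
      rw [Equiv.eq_symm_apply, eq_comm]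
    simp [this]
  simp only [hcond]
  have hS : ∀ c' : Fin n,
      (∑ σ : Equiv.Perm (Fin n), (if σ c' = 0 then (1:ℝ) else 0))
      = ∑ σ : Equiv.Perm (Fin n), (if σ 0 = 0 then (1:ℝ) else 0) := by
    intro c'
    have h := Equiv.sum_comp (Equiv.mulRight (Equiv.swap 0 c'))
      (fun τ : Equiv.Perm (Fin n) => if τ c' = 0 then (1:ℝ) else 0)
    rw [← h]
    refine Finset.sum_congr rfl (fun σ _ => ?_)
    simp [Equiv.Perm.mul_apply]
  have hsum : ∑ c' : Fin n, (∑ σ : Equiv.Perm (Fin n), (if σ c' = 0 then (1:ℝ) else 0))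
      = (Nat.factorial n : ℝ) := by
    rw [Finset.sum_comm]
    have hone : ∀ σ : Equiv.Perm (Fin n),
        ∑ c' : Fin n, (if σ c' = 0 then (1:ℝ) else 0) = 1 := by
      intro σ
      have hc2 : ∀ c' : Fin n, (σ c' = 0) = (c' = σ.symm 0) := by
        intro c'; simp [Equiv.apply_eq_iff_eq_symm_apply]
      simp only [hc2]
      simp
    rw [Finset.sum_congr rfl (fun σ _ => hone σ)]
    simp [Fintype.card_perm]
  have hn : (n : ℝ) ≠ 0 := Nat.cast_ne_zero.mpr (NeZero.ne n)
  have htot : (n : ℝ) * (∑ σ : Equiv.Perm (Fin n), (if σ (0:Fin n) = 0 then (1:ℝ) else 0))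
      = (Nat.factorial n : ℝ) := by
    calc (n : ℝ) * (∑ σ : Equiv.Perm (Fin n), (if σ (0:Fin n) = 0 then (1:ℝ) else 0))
        = ∑ _c : Fin n, (∑ σ : Equiv.Perm (Fin n), (if σ (0:Fin n) = 0 then (1:ℝ) else 0)) := by
          rw [Finset.sum_const]; simp [mul_comm]
      _ = ∑ c' : Fin n, (∑ σ : Equiv.Perm (Fin n), (if σ c' = 0 then (1:ℝ) else 0)) :=
          Finset.sum_congr rfl (fun c' _ => (hS c').symm)
      _ = (Nat.factorial n : ℝ) := hsum
  rw [hS c, eq_div_iff hn]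
  linarith [htot]

lemma nfact_ne : (Nat.factorial n : ℝ) ≠ 0 :=
  Nat.cast_ne_zero.mpr (Nat.factorial_ne_zero n)

lemma ub (hp0 : 0 ≤ p) (A : (Fin n → Fin 2) → Fin n) :
    shuffleSuccess n (Pvec n p) A ≤ p + (1 - p) / n := by
  rw [success_eq]
  have hn : (0:ℝ) < n := by
    exact_mod_cast Nat.pos_of_ne_zero (NeZero.ne n)
  have hb : ∑ σ : Equiv.Perm (Fin n),
      (p * (if A (fun i => if i = σ.symm 0 then 0 else 1) = σ.symm 0 then (1:ℝ) else 0)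
       + (1 - p) * (if A (fun _ => 1) = σ.symm 0 then 1 else 0))
      ≤ ∑ σ : Equiv.Perm (Fin n),
      (p + (1 - p) * (if A (fun _ => 1) = σ.symm 0 then 1 else 0)) := by
    refine Finset.sum_le_sum (fun σ _ => ?_)
    have : p * (if A (fun i => if i = σ.symm 0 then 0 else 1) = σ.symm 0 then (1:ℝ) else 0) ≤ p := by
      split <;> simp [hp0]
    linarith
  have hc : ∑ σ : Equiv.Perm (Fin n),
      (p + (1 - p) * (if A (fun _ => 1) = σ.symm 0 then (1:ℝ) else 0))
      = (Nat.factorial n : ℝ) * p + (1 - p) * ((Nat.factorial n : ℝ) / n) := by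
    rw [Finset.sum_add_distrib, ← Finset.mul_sum, count (A (fun _ => 1))]
    simp [Fintype.card_perm, mul_comm]
  have hfac : (0:ℝ) < (Nat.factorial n : ℝ) := by
    exact_mod_cast Nat.factorial_pos n
  calc (Nat.factorial n : ℝ)⁻¹ * _ ≤ (Nat.factorial n : ℝ)⁻¹ *
        ((Nat.factorial n : ℝ) * p + (1 - p) * ((Nat.factorial n : ℝ) / n)) := by
        rw [← hc]
        exact mul_le_mul_of_nonneg_left hb (by positivity)
    _ = p + (1 - p) / n := by
        field_simp

noncomputable def Aopt (n : ℕ) [NeZero n] : (Fin n → Fin 2) → Fin n :=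
  fun y => if h : ∃ j, y j = 0 then h.choose else 0

lemma opt_eq : shuffleSuccess n (Pvec n p) (Aopt n) = p + (1 - p) / n := by
  rw [success_eq]
  have h1 : ∀ σ : Equiv.Perm (Fin n),
      Aopt n (fun i => if i = σ.symm 0 then 0 else 1) = σ.symm 0 := by
    intro σ
    unfold Aopt
    have hex : ∃ j, (fun i => if i = σ.symm 0 then (0:Fin 2) else 1) j = 0 :=
      ⟨σ.symm 0, by simp⟩
    rw [dif_pos hex]
    have hspec := hex.choose_spec
    simp only at hspec
    by_cases hch : hex.choose = σ.symm 0
    · exact hch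
    · rw [if_neg hch] at hspec
      exact absurd hspec one_ne_zero
  have hterm : ∀ σ : Equiv.Perm (Fin n),
      (p * (if Aopt n (fun i => if i = σ.symm 0 then 0 else 1) = σ.symm 0 then (1:ℝ) else 0)
       + (1 - p) * (if Aopt n (fun _ => 1) = σ.symm 0 then 1 else 0))
      = p + (1 - p) * (if Aopt n (fun _ => 1) = σ.symm 0 then (1:ℝ) else 0) := by
    intro σ
    rw [h1 σ]
    simp
  rw [Finset.sum_congr rfl (fun σ _ => hterm σ), Finset.sum_add_distrib, ← Finset.mul_sum,
    count (Aopt n (fun _ => 1))]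
  have hn : (n : ℝ) ≠ 0 := Nat.cast_ne_zero.mpr (NeZero.ne n)
  have hfac : (Nat.factorial n : ℝ) ≠ 0 := nfact_ne
  simp only [Finset.sum_const, Finset.card_univ, Fintype.card_perm, Fintype.card_fin,
    nsmul_eq_mul]
  field_simp

end Stmt4Aux

open Stmt4Aux in
theorem stmt4 (p : ℝ) (hp : p ∈ Set.Icc (0:ℝ) 1)
    (P Q : Fin 2 → ℝ)
    (hP : P = fun y => if y = 0 then p else 1 - p)
    (hQ : Q = fun y => if y = 0 then 0 else 1)
    (n : ℕ) [NeZero n] :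
    betaN P Q n = p + (1 - p) / n ∧
    betaN P Q n - 1 / n = (1 - 1 / n) * p ∧
    (1 - 1 / n) * p = (1 - 1 / n) * ((1 / 2) * ∑ y, |P y - Q y|) := by
  obtain ⟨hp0, hp1⟩ := hp
  have hpv : (fun i : Fin n => if i = 0 then P else Q) = Pvec n p := by
    funext i
    by_cases h : i = 0 <;> simp [Pvec, h, hP, hQ]
  have hβ : betaN P Q n = p + (1 - p) / n := by
    unfold betaN
    rw [hpv]
    apply le_antisymm
    · exact ciSup_le (fun A => ub hp0 A)
    · exact le_ciSup_of_le
        ⟨p + (1 - p) / n, by rintro x ⟨A, rfl⟩; exact ub hp0 A⟩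
        (Aopt n) opt_eq.ge
  have hn : (n : ℝ) ≠ 0 := Nat.cast_ne_zero.mpr (NeZero.ne n)
  have hsum2 : ∑ y, |P y - Q y| = 2 * p := by
    subst hP hQ
    rw [Fin.sum_univ_two]
    show |(if (0:Fin 2) = 0 then p else 1 - p) - (if (0:Fin 2) = 0 then (0:ℝ) else 1)| +
      |(if (1:Fin 2) = 0 then p else 1 - p) - (if (1:Fin 2) = 0 then (0:ℝ) else 1)| = 2 * p
    rw [if_pos rfl, if_pos rfl, if_neg (by decide : ¬((1:Fin 2) = 0)),
      if_neg (by decide : ¬((1:Fin 2) = 0))]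
    rw [sub_zero, abs_of_nonneg hp0]
    have h2 : (1:ℝ) - p - 1 = -p := by ring
    rw [h2, abs_neg, abs_of_nonneg hp0]
    ring
  refine ⟨hβ, ?_, ?_⟩
  · rw [hβ]; field_simp; ring
  · rw [hsum2]; ring
end

section
/- Let P(0)=0, P(1)=1 and Q(0)=p, Q(1)=1-p with p ∈ [0,1). Then the Bayes-optimal re-identification success probability in the shuffle game with one P-sample among n-1 Q-samples equals (1 - p^n)/((1-p)·n). -/
open scoped Classical BigOperators

/-! Undoing the shuffle, an adversary `A` wins with probability `n⁻¹ ∑_z L_{A z}(z)`, where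
`L_a(z)` is the likelihood of the observed vector `z` when position `a` holds the `P`-sample
(the random permutation puts the target at each position with probability `1/n`). Hence the
optimum picks a position of maximal likelihood, and `β_n = n⁻¹ ∑_z max_a L_a(z)`. When `P` is
the point mass at `1`, `L_a(z)` vanishes unless `z a = 1`, in which case it equals
`Qⁿ(z) / Q 1`; so the maximum is `Qⁿ(z) / (1 - p)` for every `z ≠ 0`, and these masses add up
to `1 - pⁿ`. -/

open Finset Equiv

theorem Equiv.Perm.card_nsmul_sum_apply {α M : Type*} [Fintype α] [DecidableEq α]
    [AddCommMonoid M] (f : α → M) (a : α) :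
    Fintype.card α • ∑ σ : Perm α, f (σ a) = (Fintype.card α).factorial • ∑ b, f b := by
  have hindep (x : α) : ∑ σ : Perm α, f (σ x) = ∑ σ : Perm α, f (σ a) :=
    Fintype.sum_equiv (Equiv.mulRight (swap x a)) _ _ fun σ => by simp
  calc Fintype.card α • ∑ σ : Perm α, f (σ a)
      = ∑ x, ∑ σ : Perm α, f (σ x) := by simp [hindep]
    _ = ∑ σ : Perm α, ∑ x, f (σ x) := sum_comm
    _ = (Fintype.card α).factorial • ∑ b, f b := by
      simp [Equiv.sum_comp, Fintype.card_perm]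

variable {Y : Type*} {n : ℕ}

noncomputable def targetLikelihood (P Q : Y → ℝ) (z : Fin n → Y) (a : Fin n) : ℝ :=
  ∏ j, (if j = a then P else Q) (z j)

noncomputable def maxTargetLikelihood [NeZero n] (P Q : Y → ℝ) (z : Fin n → Y) : ℝ :=
  (univ : Finset (Fin n)).sup' univ_nonempty (targetLikelihood P Q z)

theorem shuffleSuccess_eq_sum_targetLikelihood [Fintype Y] [NeZero n] (P Q : Y → ℝ)
    (A : (Fin n → Y) → Fin n) :
    shuffleSuccess n (fun i => if i = 0 then P else Q) A
      = (n : ℝ)⁻¹ * ∑ z, targetLikelihood P Q z (A z) := by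
  set F : Fin n → (Fin n → Y) → ℝ := fun a z =>
    if A z = a then targetLikelihood P Q z a else 0
  have hreindex (σ : Perm (Fin n)) :
      ∑ y : Fin n → Y, (∏ i, (if i = 0 then P else Q) (y i)) *
          (if A (fun i => y (σ i)) = σ.symm 0 then 1 else 0)
        = ∑ z, F (σ.symm 0) z := by
    refine Fintype.sum_equiv (arrowCongr σ.symm (Equiv.refl Y)) _ _ fun y => ?_
    have hprod : ∏ i, (if i = 0 then P else Q) (y i)
        = targetLikelihood P Q (fun i => y (σ i)) (σ.symm 0) := by
      rw [← Equiv.prod_comp σ]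
      simp only [targetLikelihood, eq_symm_apply]
    have hz : arrowCongr σ.symm (Equiv.refl Y) y = fun i => y (σ i) := rfl
    simp [F, hprod, hz]
  have hn : (n : ℝ) ≠ 0 := Nat.cast_ne_zero.mpr (NeZero.ne n)
  have haverage (z : Fin n → Y) :
      ∑ σ : Perm (Fin n), F (σ.symm 0) z = n.factorial / n * targetLikelihood P Q z (A z) := by
    have hinv : ∑ σ : Perm (Fin n), F (σ.symm 0) z = ∑ σ : Perm (Fin n), F (σ 0) z :=
      Fintype.sum_equiv (Equiv.inv _) _ _ fun σ => rfl
    have hF : ∑ a, F a z = targetLikelihood P Q z (A z) := by simp [F]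
    have := Perm.card_nsmul_sum_apply (F · z) 0
    rw [Fintype.card_fin, nsmul_eq_mul, nsmul_eq_mul, hF] at this
    rw [hinv, div_mul_eq_mul_div, eq_div_iff hn, mul_comm, this]
  unfold shuffleSuccess
  simp_rw [hreindex]
  rw [sum_comm]
  simp_rw [haverage]
  rw [← mul_sum, ← mul_assoc]
  field_simp

theorem betaN_eq_sum_maxTargetLikelihood [Fintype Y] [NeZero n] (P Q : Y → ℝ) :
    betaN P Q n = (n : ℝ)⁻¹ * ∑ z : Fin n → Y, maxTargetLikelihood P Q z := by
  have hbound (A : (Fin n → Y) → Fin n) : shuffleSuccess n (fun i => if i = 0 then P else Q) A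
      ≤ (n : ℝ)⁻¹ * ∑ z : Fin n → Y, maxTargetLikelihood P Q z := by
    rw [shuffleSuccess_eq_sum_targetLikelihood]
    gcongr with z
    exact le_sup' _ (mem_univ _)
  choose Aopt _ hAopt using fun z =>
    exists_mem_eq_sup' (univ_nonempty (α := Fin n)) (targetLikelihood P Q z)
  refine le_antisymm (ciSup_le hbound) ?_
  calc (n : ℝ)⁻¹ * ∑ z : Fin n → Y, maxTargetLikelihood P Q z
      = shuffleSuccess n (fun i => if i = 0 then P else Q) Aopt := by
        simp [shuffleSuccess_eq_sum_targetLikelihood, maxTargetLikelihood, hAopt]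
    _ ≤ betaN P Q n := le_ciSup ⟨_, Set.forall_mem_range.2 hbound⟩ Aopt

theorem targetLikelihood_eq_mul_prod_erase (P Q : Y → ℝ) (z : Fin n → Y) (a : Fin n) :
    targetLikelihood P Q z a = P (z a) * ∏ j ∈ univ.erase a, Q (z j) := by
  rw [targetLikelihood, ← mul_prod_erase univ _ (mem_univ a), if_pos rfl]
  congr 1
  exact prod_congr rfl fun j hj => by rw [if_neg (ne_of_mem_erase hj)]

theorem targetLikelihood_of_pointMass {P Q : Fin 2 → ℝ}
    (hP : P = fun y => if y = 0 then 0 else 1) (hQ1 : Q 1 ≠ 0) (z : Fin n → Fin 2) (a : Fin n) :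
    targetLikelihood P Q z a = if z a = 0 then 0 else (∏ j, Q (z j)) / Q 1 := by
  rw [targetLikelihood_eq_mul_prod_erase, ← mul_prod_erase univ (fun j => Q (z j)) (mem_univ a)]
  by_cases h : z a = 0
  · simp [hP, h]
  · have h1 : z a = 1 := by omega
    simp [hP, h1, hQ1]

theorem maxTargetLikelihood_of_pointMass [NeZero n] {P Q : Fin 2 → ℝ}
    (hP : P = fun y => if y = 0 then 0 else 1) (hQ0 : 0 ≤ Q 0) (hQ1 : 0 < Q 1)
    (z : Fin n → Fin 2) :
    maxTargetLikelihood P Q z = (if z = 0 then 0 else ∏ j, Q (z j)) / Q 1 := by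
  simp_rw [maxTargetLikelihood, targetLikelihood_of_pointMass hP hQ1.ne', ite_div, zero_div]
  split_ifs with hz
  · simp [hz]
  obtain ⟨a, ha⟩ := Function.ne_iff.mp hz
  have hQ : ∀ y, 0 ≤ Q y := Fin.forall_fin_two.2 ⟨hQ0, hQ1.le⟩
  have hW : 0 ≤ (∏ j, Q (z j)) / Q 1 := div_nonneg (prod_nonneg fun j _ => hQ _) hQ1.le
  refine le_antisymm (sup'_le _ _ fun b _ => ?_) (le_sup'_of_le _ (mem_univ a) ?_)
  · split_ifs
    · exact hW
    · rfl
  · exact (if_neg ha).ge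

theorem sum_ite_eq_zero_prod_apply {R : Type*} [CommRing R] (q : Fin 2 → R) :
    ∑ z : Fin n → Fin 2, (if z = 0 then 0 else ∏ j, q (z j)) = (q 0 + q 1) ^ n - q 0 ^ n := by
  have htotal : ∑ z : Fin n → Fin 2, ∏ j, q (z j) = (q 0 + q 1) ^ n := by
    rw [← Fintype.prod_sum]; simp [Fin.sum_univ_two]
  have hzero : ∏ j : Fin n, q ((0 : Fin n → Fin 2) j) = q 0 ^ n := by simp
  rw [Fintype.sum_eq_add_sum_compl 0] at htotal ⊢
  rw [if_pos rfl, zero_add, ← htotal, hzero, add_sub_cancel_left]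
  exact sum_congr rfl fun z hz => if_neg (by simpa using hz)

theorem stmt5 (p : ℝ) (hp : p ∈ Set.Ico (0:ℝ) 1)
    (P Q : Fin 2 → ℝ)
    (hP : P = fun y => if y = 0 then 0 else 1)
    (hQ : Q = fun y => if y = 0 then p else 1 - p)
    (n : ℕ) [NeZero n] :
    betaN P Q n = (1 - p ^ n) / ((1 - p) * n) := by
  obtain ⟨hp0, hp1⟩ := hp
  have hQ0 : Q 0 = p := by simp [hQ]
  have hQ1 : Q 1 = 1 - p := by simp [hQ]
  rw [betaN_eq_sum_maxTargetLikelihood,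
    sum_congr rfl fun z _ => maxTargetLikelihood_of_pointMass hP (hQ0 ▸ hp0) (by linarith) z,
    ← sum_div, sum_ite_eq_zero_prod_apply, hQ0, hQ1, add_sub_cancel, one_pow]
  have : (1 - p) ≠ 0 := by linarith
  have : (n : ℝ) ≠ 0 := Nat.cast_ne_zero.mpr (NeZero.ne n)
  field_simp
end

section
/- Let P and Q be discrete distributions with likelihood-ratio CDFs F(t) = Pr_{y~P}[P(y)/Q(y) ≤ t] and G(t) = Pr_{y~Q}[P(y)/Q(y) ≤ t], supported on finitely many ratio values t₁ < t₂ < … < t_k (all with Q-mass positive), and let f(∞) = ∑_{y : Q(y)=0} P(y). Then the Bayes-optimal success probability satisfies β_n(P,Q) = f(∞) + (1/n) ∑_{j=1}^{k} t_j · (G(t_j)^n − G(t_j⁻)^n), where G(t⁻) = Pr_{y~Q}[P(y)/Q(y) < t]. -/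
open scoped Classical BigOperators

/-!
Relabelling by the shuffle turns the success probability of an adversary `A` into
`(1/n) ∑_z g(z, A z)`, where `g(z, k) = P(z k) ∏_{j ≠ k} Q(z j)` (`plantedLikelihood`) is the
likelihood of the observed vector `z` when the `P`-sample sits at position `k`; hence
`β_n = (1/n) ∑_z max_k g(z, k)`. If `Q (z j) = 0` for some `j`, only `k = j` contributes, and these
`z` together give `n · f(∞)`. Otherwise `g(z, k) = (P/Q)(z k) · ∏_j Q(z j)`, so the rest is the
`Q^⊗n`-expectation of the largest of `n` i.i.d. likelihood ratios, which takes the value `t` with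
probability `G(t)^n - G(t⁻)^n`.
-/

open Finset

section PlantedLikelihood

variable {Y ι : Type*} [Fintype ι] [DecidableEq ι]

noncomputable def plantedLikelihood (P Q : Y → ℝ) (z : ι → Y) (k : ι) : ℝ :=
  ∏ i, (if i = k then P else Q) (z i)

variable {P Q : Y → ℝ} {z : ι → Y} {k : ι}

lemma plantedLikelihood_eq_mul_prod_erase :
    plantedLikelihood P Q z k = P (z k) * ∏ j ∈ univ.erase k, Q (z j) := by
  rw [plantedLikelihood, ← mul_prod_erase univ _ (mem_univ k), if_pos rfl]
  exact congrArg _ (prod_congr rfl fun j hj => by rw [if_neg (ne_of_mem_erase hj)])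

lemma plantedLikelihood_nonneg (hP0 : ∀ y, 0 ≤ P y) (hQ0 : ∀ y, 0 ≤ Q y) :
    0 ≤ plantedLikelihood P Q z k :=
  prod_nonneg fun i _ => by split_ifs; exacts [hP0 _, hQ0 _]

lemma plantedLikelihood_eq_zero_of_ne {j : ι} (hj : Q (z j) = 0) (hk : k ≠ j) :
    plantedLikelihood P Q z k = 0 :=
  prod_eq_zero (mem_univ j) (by rw [if_neg hk.symm, hj])

lemma plantedLikelihood_eq_div_mul_prod (hk : Q (z k) ≠ 0) :
    plantedLikelihood P Q z k = P (z k) / Q (z k) * ∏ j, Q (z j) := by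
  rw [plantedLikelihood_eq_mul_prod_erase, ← mul_prod_erase univ (fun j => Q (z j)) (mem_univ k),
    ← mul_assoc, div_mul_cancel₀ _ hk]

lemma sum_piFinset_plantedLikelihood (s : Finset Y) (k : ι) :
    ∑ z ∈ Fintype.piFinset fun _ => s, plantedLikelihood P Q z k
      = (∑ y ∈ s, P y) * (∑ y ∈ s, Q y) ^ (Fintype.card ι - 1) := by
  simp only [plantedLikelihood]
  rw [← prod_univ_sum, ← mul_prod_erase univ _ (mem_univ k), if_pos rfl,
    prod_congr rfl fun j hj => by rw [if_neg (ne_of_mem_erase hj)], prod_const,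
    card_erase_of_mem (mem_univ k), card_univ]

end PlantedLikelihood

theorem Equiv.Perm.sum_apply_zero {M : Type*} [AddCommMonoid M] {m : ℕ} (F : Fin (m + 1) → M) :
    ∑ σ : Perm (Fin (m + 1)), F (σ 0) = m.factorial • ∑ k, F k := by
  rw [← Equiv.sum_comp decomposeFin.symm, Fintype.sum_prod_type]
  simp only [decomposeFin_symm_apply_zero, sum_const, card_univ, Fintype.card_perm,
    Fintype.card_fin, smul_sum]

theorem ciSup_sum_apply_eq_sum_sup' {Z ι : Type*} [Fintype Z] [Fintype ι] [Nonempty ι]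
    (w : Z → ι → ℝ) :
    ⨆ A : Z → ι, ∑ z, w z (A z) = ∑ z, univ.sup' univ_nonempty (w z) := by
  choose best hbest using fun z => exists_mem_eq_sup' univ_nonempty (w z)
  refine le_antisymm (ciSup_le fun A => sum_le_sum fun z _ => le_sup' (w z) (mem_univ _)) ?_
  calc ∑ z, univ.sup' univ_nonempty (w z) = ∑ z, w z (best z) :=
        sum_congr rfl fun z _ => (hbest z).2
    _ ≤ _ := Finite.le_ciSup (fun A : Z → ι => ∑ z, w z (A z)) best

section Shuffle

variable {Y : Type*} [Fintype Y]

theorem shuffleSuccess_eq_sum_shuffled (n : ℕ) [NeZero n] (Pvec : Fin n → Y → ℝ)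
    (A : (Fin n → Y) → Fin n) :
    shuffleSuccess n Pvec A = (n.factorial : ℝ)⁻¹ *
      ∑ σ : Equiv.Perm (Fin n), ∑ z : Fin n → Y,
        (∏ j, Pvec (σ j) (z j)) * (if A z = σ.symm 0 then 1 else 0) := by
  refine congrArg _ (sum_congr rfl fun σ _ => ?_)
  refine Fintype.sum_equiv (σ.symm.arrowCongr (Equiv.refl Y)) _ _ fun y => ?_
  rw [← Equiv.prod_comp σ]
  rfl

theorem shuffleSuccess_eq_sum_plantedLikelihood (P Q : Y → ℝ) (n : ℕ) [NeZero n]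
    (A : (Fin n → Y) → Fin n) :
    shuffleSuccess n (fun i => if i = 0 then P else Q) A
      = (n : ℝ)⁻¹ * ∑ z, plantedLikelihood P Q z (A z) := by
  obtain ⟨m, rfl⟩ : ∃ m, n = m + 1 := ⟨n - 1, (Nat.sub_add_cancel NeZero.one_le).symm⟩
  have hσ : ∀ (σ : Equiv.Perm (Fin (m + 1))) z,
      ∏ j, (if σ j = 0 then P else Q) (z j) = plantedLikelihood P Q z (σ.symm 0) := by
    intro σ z
    simp only [plantedLikelihood, Equiv.eq_symm_apply]
  have hz : ∀ z : Fin (m + 1) → Y,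
      ∑ σ : Equiv.Perm (Fin (m + 1)),
        plantedLikelihood P Q z (σ.symm 0) * (if A z = σ.symm 0 then 1 else 0)
      = m.factorial * plantedLikelihood P Q z (A z) := by
    intro z
    rw [← Equiv.sum_comp (Equiv.inv _)]
    simp only [Equiv.inv_apply, Equiv.Perm.inv_def, Equiv.symm_symm]
    rw [Equiv.Perm.sum_apply_zero fun k => plantedLikelihood P Q z k * if A z = k then 1 else 0]
    simp
  rw [shuffleSuccess_eq_sum_shuffled, sum_comm]
  simp only [hσ, hz, ← mul_sum, ← mul_assoc, Nat.factorial_succ]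
  push_cast
  field_simp

end Shuffle

theorem betaN_eq_sum_sup'_plantedLikelihood {Y : Type*} [Fintype Y] (P Q : Y → ℝ) (n : ℕ)
    [NeZero n] :
    betaN P Q n = (n : ℝ)⁻¹ * ∑ z : Fin n → Y, univ.sup' univ_nonempty (plantedLikelihood P Q z) := by
  simp only [betaN, shuffleSuccess_eq_sum_plantedLikelihood]
  rw [← Real.mul_iSup_of_nonneg (by positivity), ciSup_sum_apply_eq_sum_sup']

section MaxOfIID

variable {Y ι : Type*} [Fintype ι] [DecidableEq ι]

lemma sum_piFinset_prod (s : Finset Y) (Q : Y → ℝ) :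
    ∑ z ∈ Fintype.piFinset fun _ : ι => s, ∏ j, Q (z j) = (∑ y ∈ s, Q y) ^ Fintype.card ι := by
  rw [← prod_univ_sum (fun _ => s) fun _ y => Q y, prod_const, card_univ]

theorem sum_piFinset_prod_mul_sup' [Nonempty ι] (s : Finset Y) (Q r : Y → ℝ) :
    ∑ z ∈ Fintype.piFinset fun _ : ι => s, (∏ j, Q (z j)) * univ.sup' univ_nonempty (r ∘ z)
      = ∑ t ∈ s.image r, t * ((∑ y ∈ s.filter (r · ≤ t), Q y) ^ Fintype.card ι
          - (∑ y ∈ s.filter (r · < t), Q y) ^ Fintype.card ι) := by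
  set M : (ι → Y) → ℝ := fun z => univ.sup' univ_nonempty (r ∘ z)
  have hM : ∀ z ∈ Fintype.piFinset fun _ : ι => s, M z ∈ s.image r := fun z hz => by
    obtain ⟨k, -, hk⟩ := exists_mem_eq_sup' univ_nonempty (r ∘ z)
    rw [show M z = r (z k) from hk]
    exact mem_image_of_mem r (Fintype.mem_piFinset.1 hz k)
  rw [← sum_fiberwise_of_maps_to hM]
  refine sum_congr rfl fun t _ => ?_
  have hfiber : {z ∈ Fintype.piFinset fun _ : ι => s | M z = t}
      = {z ∈ Fintype.piFinset fun _ : ι => s | M z ≤ t}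
        \ {z ∈ Fintype.piFinset fun _ : ι => s | M z < t} := by
    ext z
    simp only [mem_filter, mem_sdiff]
    constructor
    · rintro ⟨hz, rfl⟩
      exact ⟨⟨hz, le_rfl⟩, fun h => lt_irrefl _ h.2⟩
    · rintro ⟨⟨hz, hle⟩, hnlt⟩
      exact ⟨hz, hle.antisymm (not_lt.1 fun h => hnlt ⟨hz, h⟩)⟩
  have hle : {z ∈ Fintype.piFinset fun _ : ι => s | M z ≤ t}
      = Fintype.piFinset fun _ => s.filter (r · ≤ t) := by
    ext z
    simp only [M, mem_filter, Fintype.mem_piFinset, sup'_le_iff, mem_univ, true_implies,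
      Function.comp_apply, forall_and]
  have hlt : {z ∈ Fintype.piFinset fun _ : ι => s | M z < t}
      = Fintype.piFinset fun _ => s.filter (r · < t) := by
    ext z
    simp only [M, mem_filter, Fintype.mem_piFinset, sup'_lt_iff, mem_univ, true_implies,
      Function.comp_apply, forall_and]
  calc ∑ z ∈ Fintype.piFinset fun _ : ι => s with M z = t, (∏ j, Q (z j)) * M z
      = t * ∑ z ∈ Fintype.piFinset fun _ : ι => s with M z = t, ∏ j, Q (z j) := by
        rw [mul_sum]
        exact sum_congr rfl fun z hz => by rw [(mem_filter.1 hz).2, mul_comm]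
    _ = _ := by
        rw [hfiber, sum_sdiff_eq_sub (monotone_filter_right _ fun _ _ => le_of_lt), hle, hlt,
          sum_piFinset_prod, sum_piFinset_prod]

end MaxOfIID

section OptimalLikelihood

variable {Y ι : Type*} [Fintype ι] [DecidableEq ι] [Nonempty ι] {P Q : Y → ℝ}

lemma sup'_plantedLikelihood_eq_sum (hP0 : ∀ y, 0 ≤ P y) (hQ0 : ∀ y, 0 ≤ Q y) {z : ι → Y}
    {j : ι} (hj : Q (z j) = 0) :
    univ.sup' univ_nonempty (plantedLikelihood P Q z) = ∑ k, plantedLikelihood P Q z k := by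
  have hzero : ∀ k, k ≠ j → plantedLikelihood P Q z k = 0 :=
    fun k hk => plantedLikelihood_eq_zero_of_ne hj hk
  rw [sum_eq_single j (fun k _ hk => hzero k hk) (by simp)]
  refine le_antisymm (sup'_le _ _ fun k _ => ?_) (le_sup' _ (mem_univ j))
  obtain rfl | hk := eq_or_ne k j
  · exact le_rfl
  · exact (hzero k hk).le.trans (plantedLikelihood_nonneg hP0 hQ0)

lemma sup'_plantedLikelihood_eq_prod_mul_sup' (hQ0 : ∀ y, 0 ≤ Q y) {z : ι → Y}
    (hz : ∀ k, Q (z k) ≠ 0) :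
    univ.sup' univ_nonempty (plantedLikelihood P Q z)
      = (∏ j, Q (z j)) * univ.sup' univ_nonempty ((fun y => P y / Q y) ∘ z) := by
  rw [mul₀_sup' (prod_nonneg fun j _ => hQ0 _)]
  exact sup'_congr _ rfl fun k _ => by rw [plantedLikelihood_eq_div_mul_prod (hz k), mul_comm]; rfl

theorem sum_sup'_plantedLikelihood_of_exists_eq_zero [Fintype Y] (hP0 : ∀ y, 0 ≤ P y)
    (hQ0 : ∀ y, 0 ≤ Q y) (hP1 : ∑ y, P y = 1) (hQ1 : ∑ y, Q y = 1) :
    ∑ z ∈ univ \ Fintype.piFinset (fun _ : ι => {y | Q y ≠ 0}),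
        univ.sup' univ_nonempty (plantedLikelihood P Q z)
      = Fintype.card ι * ∑ y with Q y = 0, P y := by
  have hsupport : ∑ y with Q y ≠ 0, P y = 1 - ∑ y with Q y = 0, P y := by
    rw [← hP1, ← sum_filter_add_sum_filter_not univ (Q · = 0)]
    ring
  have hmarginal : ∀ k : ι, ∑ z ∈ univ \ Fintype.piFinset (fun _ : ι => {y | Q y ≠ 0}),
      plantedLikelihood P Q z k = ∑ y with Q y = 0, P y := fun k => by
    rw [sum_sdiff_eq_sub (subset_univ _), ← Fintype.piFinset_univ, sum_piFinset_plantedLikelihood,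
      sum_piFinset_plantedLikelihood, sum_filter_ne_zero, hP1, hQ1, hsupport]
    ring
  calc _ = ∑ z ∈ univ \ Fintype.piFinset (fun _ : ι => {y | Q y ≠ 0}),
        ∑ k, plantedLikelihood P Q z k := sum_congr rfl fun z hz => by
          obtain ⟨j, hj⟩ : ∃ j, Q (z j) = 0 := by simpa [Fintype.mem_piFinset] using hz
          exact sup'_plantedLikelihood_eq_sum hP0 hQ0 hj
    _ = _ := by rw [sum_comm, sum_congr rfl fun k _ => hmarginal k, sum_const, card_univ,
          nsmul_eq_mul]

end OptimalLikelihood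

/-- Discrete closed form: `β_n(P,Q) = f(∞) + (1/n) ∑_t t·(G(t)^n − G(t⁻)^n)`,
where the sum runs over the finitely many likelihood-ratio values attained on
`{y | Q y ≠ 0}`, `G t = Pr_{y~Q}[P y / Q y ≤ t]`, and `G(t⁻)` the strict
version. -/
theorem stmt6 {Y : Type*} [Fintype Y] (P Q : Y → ℝ)
    (hP0 : ∀ y, 0 ≤ P y) (hQ0 : ∀ y, 0 ≤ Q y)
    (hP1 : ∑ y, P y = 1) (hQ1 : ∑ y, Q y = 1)
    (n : ℕ) [NeZero n] :
    betaN P Q n =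
      (∑ y ∈ Finset.univ.filter (fun y => Q y = 0), P y) +
      (n : ℝ)⁻¹ *
        ∑ t ∈ (Finset.univ.filter (fun y => Q y ≠ 0)).image (fun y => P y / Q y),
          t * ((∑ y ∈ Finset.univ.filter (fun y => Q y ≠ 0 ∧ P y / Q y ≤ t), Q y) ^ n
             - (∑ y ∈ Finset.univ.filter (fun y => Q y ≠ 0 ∧ P y / Q y < t), Q y) ^ n) := by
  set S : Finset Y := {y | Q y ≠ 0}
  have hgood : ∑ z ∈ Fintype.piFinset fun _ : Fin n => S,
      univ.sup' univ_nonempty (plantedLikelihood P Q z)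
      = ∑ z ∈ Fintype.piFinset fun _ : Fin n => S,
          (∏ j, Q (z j)) * univ.sup' univ_nonempty ((fun y => P y / Q y) ∘ z) :=
    sum_congr rfl fun z hz => sup'_plantedLikelihood_eq_prod_mul_sup' hQ0
      fun k => (mem_filter.1 (Fintype.mem_piFinset.1 hz k)).2
  rw [betaN_eq_sum_sup'_plantedLikelihood, ← sum_sdiff (subset_univ (Fintype.piFinset _)),
    sum_sup'_plantedLikelihood_of_exists_eq_zero hP0 hQ0 hP1 hQ1, hgood,
    sum_piFinset_prod_mul_sup', Fintype.card_fin, mul_add, ← mul_assoc,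
    inv_mul_cancel₀ (NeZero.ne (n : ℝ)), one_mul]
  simp only [S, filter_filter]
end

section
/- With the setup of the discrete closed-form formula for β_n(P,Q): if M = max_{y : Q(y)≠0} P(y)/Q(y) is finite, then β_n(P,Q) ≤ f(∞) + M/n, where f(∞) = ∑_{y : Q(y)=0} P(y). -/
open scoped Classical BigOperators

/-! Pointwise `P ≤ M • Q + P₀`, where `P₀` is the part of `P` outside the support of `Q`. The
success probability of an adversary is monotone and linear in the target's distribution, so it is
at most `M` times its success against `n` i.i.d. `Q`-samples plus its success when the target is
drawn from `P₀`. Against i.i.d. samples the uniform shuffle leaves every adversary exactly `1/n`,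
and the second term is at most the total mass `f(∞)` of `P₀`. -/

open Finset Equiv Nat

theorem card_mul_card_perm_apply_eq {α : Type*} [Fintype α] [DecidableEq α] (a b : α) :
    Fintype.card α * #{σ : Perm α | σ a = b} = (Fintype.card α)! := by
  have fiber_card (c : α) : #{σ : Perm α | σ a = c} = #{σ : Perm α | σ a = b} :=
    card_equiv (Equiv.mulLeft (swap c b)) (by simp [Perm.mul_apply, swap_apply_eq_iff])
  calc Fintype.card α * #{σ : Perm α | σ a = b} = ∑ c, #{σ : Perm α | σ a = c} := by
        simp [fiber_card]
    _ = (Fintype.card α)! := by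
        rw [← card_eq_sum_card_fiberwise (by simp), Finset.card_univ, Fintype.card_perm]

theorem sum_perm_boole_eq_symm_apply {n : ℕ} [NeZero n] (k : Fin n) :
    ∑ σ : Perm (Fin n), (if k = σ.symm 0 then (1 : ℝ) else 0) = (n ! : ℝ) / n := by
  have h := card_mul_card_perm_apply_eq k (0 : Fin n)
  rw [Fintype.card_fin] at h
  simp only [eq_symm_apply, sum_boole]
  rw [eq_div_iff (by simp [NeZero.ne n]), ← h]
  push_cast
  ring

theorem prod_ite_eq_zero_apply {Y : Type*} {n : ℕ} [NeZero n] (P Q : Y → ℝ) (y : Fin n → Y) :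
    ∏ i, (if i = 0 then P else Q) (y i) = P (y 0) * ∏ i ∈ univ.erase 0, Q (y i) := by
  rw [← mul_prod_erase univ _ (mem_univ 0), if_pos rfl]
  congr 1
  exact prod_congr rfl fun i hi => by rw [if_neg (ne_of_mem_erase hi)]

section shuffle

variable {Y : Type*} [Fintype Y] {n : ℕ} [NeZero n]

theorem shuffleSuccess_mono {Pvec Pvec' : Fin n → Y → ℝ} (h0 : ∀ i y, 0 ≤ Pvec i y)
    (h : ∀ i y, Pvec i y ≤ Pvec' i y) (A : (Fin n → Y) → Fin n) :
    shuffleSuccess n Pvec A ≤ shuffleSuccess n Pvec' A := by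
  unfold shuffleSuccess
  gcongr with σ _ y _ i _
  exacts [fun i _ => h0 i _, h _ _]

theorem shuffleSuccess_le_prod_sum {Pvec : Fin n → Y → ℝ} (h0 : ∀ i y, 0 ≤ Pvec i y)
    (A : (Fin n → Y) → Fin n) : shuffleSuccess n Pvec A ≤ ∏ i, ∑ y, Pvec i y := by
  calc shuffleSuccess n Pvec A
      ≤ (n ! : ℝ)⁻¹ * ∑ _σ : Perm (Fin n), ∑ y : Fin n → Y, ∏ i, Pvec i (y i) := by
        unfold shuffleSuccess
        gcongr with σ _ y _
        exact mul_le_of_le_one_right (prod_nonneg fun i _ => h0 i _) (by split_ifs <;> norm_num)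
    _ = ∏ i, ∑ y, Pvec i y := by
        rw [sum_const, Finset.card_univ, Fintype.card_perm, Fintype.card_fin, nsmul_eq_mul,
          ← Fintype.prod_sum, inv_mul_cancel_left₀ (by positivity)]

theorem shuffleSuccess_iid (Q : Y → ℝ) (A : (Fin n → Y) → Fin n) :
    shuffleSuccess n (fun _ => Q) A = (∑ y, Q y) ^ n / n := by
  have reindex (σ : Perm (Fin n)) :
      ∑ y : Fin n → Y, (∏ i, Q (y i)) * (if A (fun i => y (σ i)) = σ.symm 0 then 1 else 0) =
        ∑ z : Fin n → Y, (∏ i, Q (z i)) * (if A z = σ.symm 0 then 1 else 0) :=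
    Fintype.sum_equiv (arrowCongr σ.symm (Equiv.refl Y)) _ _ fun y => by
      simp [arrowCongr_apply, Function.comp_def, Equiv.prod_comp σ (fun i => Q (y i))]
      rfl
  unfold shuffleSuccess
  simp only [sum_congr rfl fun σ _ => reindex σ]
  rw [sum_comm]
  simp only [← mul_sum, sum_perm_boole_eq_symm_apply, ← sum_mul, Fintype.sum_pow]
  have : (n ! : ℝ) ≠ 0 := by positivity
  field_simp

theorem shuffleSuccess_smul_add (a : ℝ) (P P' Q : Y → ℝ) (A : (Fin n → Y) → Fin n) :
    shuffleSuccess n (fun i => if i = 0 then a • P + P' else Q) A =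
      a * shuffleSuccess n (fun i => if i = 0 then P else Q) A +
        shuffleSuccess n (fun i => if i = 0 then P' else Q) A := by
  simp only [shuffleSuccess, prod_ite_eq_zero_apply, Pi.add_apply, Pi.smul_apply, smul_eq_mul,
    mul_sum, ← sum_add_distrib]
  exact sum_congr rfl fun σ _ => sum_congr rfl fun y _ => by ring

end shuffle

theorem stmt7_general {Y : Type*} [Fintype Y] (P Q : Y → ℝ)
    (hP0 : ∀ y, 0 ≤ P y) (hQ0 : ∀ y, 0 ≤ Q y)
    (hQ1 : ∑ y, Q y = 1)
    (hne : (Finset.univ.filter (fun y => Q y ≠ 0)).Nonempty)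
    (n : ℕ) [NeZero n] :
    betaN P Q n ≤
      (∑ y ∈ Finset.univ.filter (fun y => Q y = 0), P y) +
      ((Finset.univ.filter (fun y => Q y ≠ 0)).sup' hne (fun y => P y / Q y)) / n := by
  set M := (univ.filter (fun y => Q y ≠ 0)).sup' hne (fun y => P y / Q y)
  set P₀ : Y → ℝ := fun y => if Q y = 0 then P y else 0
  have hP₀ : ∀ y, 0 ≤ P₀ y := fun y => by unfold P₀; split_ifs <;> simp [hP0]
  have hP_le : ∀ y, P y ≤ (M • Q + P₀) y := fun y => by
    by_cases hy : Q y = 0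
    · simp [P₀, hy]
    · have : P y / Q y ≤ M := le_sup' (fun y => P y / Q y) (by simpa using hy)
      rw [div_le_iff₀ (lt_of_le_of_ne (hQ0 y) (Ne.symm hy))] at this
      simp [P₀, hy, this]
  have target_nonneg : ∀ (R : Y → ℝ), (∀ y, 0 ≤ R y) →
      ∀ i y, 0 ≤ (if i = (0 : Fin n) then R else Q) y := fun R hR i y => by
    split_ifs <;> simp [hR, hQ0]
  refine ciSup_le fun A => ?_
  calc shuffleSuccess n (fun i => if i = 0 then P else Q) A
      ≤ shuffleSuccess n (fun i => if i = 0 then M • Q + P₀ else Q) A :=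
        shuffleSuccess_mono (target_nonneg P hP0)
          (fun i y => by split_ifs; exacts [hP_le y, le_rfl]) A
    _ = M * shuffleSuccess n (fun _ => Q) A +
          shuffleSuccess n (fun i => if i = 0 then P₀ else Q) A := by
        simp only [shuffleSuccess_smul_add, ite_self]
    _ ≤ M * (1 / n) + ∑ y, P₀ y := by
        rw [shuffleSuccess_iid, hQ1, one_pow]
        gcongr
        refine (shuffleSuccess_le_prod_sum (target_nonneg P₀ hP₀) A).trans_eq ?_
        simp [apply_ite (fun R : Y → ℝ => ∑ y, R y), hQ1]
    _ = _ := by rw [sum_filter]; ring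

theorem stmt7 {Y : Type*} [Fintype Y] (P Q : Y → ℝ)
    (hP0 : ∀ y, 0 ≤ P y) (hQ0 : ∀ y, 0 ≤ Q y)
    (hP1 : ∑ y, P y = 1) (hQ1 : ∑ y, Q y = 1)
    (hne : (Finset.univ.filter (fun y => Q y ≠ 0)).Nonempty)
    (n : ℕ) [NeZero n] :
    betaN P Q n ≤
      (∑ y ∈ Finset.univ.filter (fun y => Q y = 0), P y) +
      ((Finset.univ.filter (fun y => Q y ≠ 0)).sup' hne (fun y => P y / Q y)) / n :=
  stmt7_general P Q hP0 hQ0 hQ1 hne n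
end

section
/- With the same setup, if f(∞) = 0 and M = max_{y:Q(y)≠0} P(y)/Q(y), then lim_{n→∞} n·β_n(P,Q) = M. -/
open scoped Classical BigOperators

lemma shuffle_eq {Y : Type*} [Fintype Y] (P Q : Y → ℝ) (n : ℕ)
    (A : (Fin (n+1) → Y) → Fin (n+1)) :
    shuffleSuccess (n+1) (fun i => if i = 0 then P else Q) A
      = ((n+1 : ℕ) : ℝ)⁻¹ *
        ∑ z : Fin (n+1) → Y, ∏ j, (if j = A z then P else Q) (z j) := by
  classical
  set g : Fin (n+1) → ℝ := fun k =>
    ∑ z : Fin (n+1) → Y,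
      (∏ j, (if j = k then P else Q) (z j)) * (if A z = k then 1 else 0) with hg
  have h1 : ∀ σ : Equiv.Perm (Fin (n+1)),
      (∑ y : Fin (n+1) → Y, (∏ i, (if i = 0 then P else Q) (y i)) *
        (if A (fun i => y (σ i)) = σ.symm 0 then 1 else 0)) = g (σ.symm 0) := by
    intro σ
    have key := Equiv.sum_comp (Equiv.arrowCongr σ.symm (Equiv.refl Y))
      (fun z => (∏ j, (if j = σ.symm 0 then P else Q) (z j)) *
        (if A z = σ.symm 0 then 1 else 0))
    rw [hg]
    refine Eq.trans ?_ key
    apply Finset.sum_congr rfl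
    intro y _
    have he : (Equiv.arrowCongr σ.symm (Equiv.refl Y)) y = fun i => y (σ i) := by
      funext i; simp [Equiv.arrowCongr_apply]
    rw [he]
    congr 1
    rw [← Equiv.prod_comp σ (fun i => (if i = 0 then P else Q) (y i))]
    apply Finset.prod_congr rfl
    intro j _
    have : (j = σ.symm 0) ↔ (σ j = 0) := by
      constructor
      · rintro rfl; simp
      · intro h; simp [← h]
    by_cases hj : j = σ.symm 0
    · simp [hj]
    · have : ¬ (σ j = 0) := fun h => hj (this.mpr h)
      simp [hj, this]
  unfold shuffleSuccess
  rw [Finset.sum_congr rfl (fun σ _ => h1 σ)]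
  have h2 : (∑ σ : Equiv.Perm (Fin (n+1)), g (σ.symm 0))
      = ∑ σ : Equiv.Perm (Fin (n+1)), g (σ 0) := by
    rw [← Equiv.sum_comp (Equiv.inv (Equiv.Perm (Fin (n+1)))) (fun σ => g (σ 0))]
    apply Finset.sum_congr rfl
    intro σ _
    congr 1
  rw [h2]
  have h3 : (∑ σ : Equiv.Perm (Fin (n+1)), g (σ 0))
      = (Nat.factorial n : ℝ) * ∑ k, g k := by
    rw [← Equiv.sum_comp (Equiv.Perm.decomposeFin).symm (fun σ => g (σ 0))]
    have : ∀ p : Fin (n+1) × Equiv.Perm (Fin n),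
        g ((Equiv.Perm.decomposeFin.symm p) 0) = g p.1 := by
      rintro ⟨p1, p2⟩; simp
    rw [Finset.sum_congr rfl (fun p _ => this p)]
    rw [Fintype.sum_prod_type]
    simp [Finset.sum_const, Fintype.card_perm, mul_comm]
    rw [Finset.mul_sum]
  rw [h3]
  have h4 : ∀ z : Fin (n+1) → Y,
      (∑ k, (∏ j, (if j = k then P else Q) (z j)) * (if A z = k then 1 else 0))
        = ∏ j, (if j = A z then P else Q) (z j) := by
    intro z
    rw [Finset.sum_eq_single (A z)]
    · simp
    · intro k _ hk; simp [Ne.symm hk]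
    · simp
  have h5 : ∑ k, g k = ∑ z : Fin (n+1) → Y, ∏ j, (if j = A z then P else Q) (z j) := by
    rw [hg]
    rw [Finset.sum_comm]
    exact Finset.sum_congr rfl (fun z _ => h4 z)
  rw [h5, ← mul_assoc]
  congr 1
  rw [Nat.factorial_succ]
  push_cast
  rw [mul_comm]
  field_simp

lemma betaN_eq {Y : Type*} [Fintype Y] (P Q : Y → ℝ) (n : ℕ) :
    betaN P Q (n+1)
      = ((n+1 : ℕ) : ℝ)⁻¹ * ∑ z : Fin (n+1) → Y,
          Finset.univ.sup' Finset.univ_nonempty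
            (fun k => ∏ j, (if j = k then P else Q) (z j)) := by
  classical
  set m : (Fin (n+1) → Y) → ℝ := fun z =>
    Finset.univ.sup' Finset.univ_nonempty
      (fun k => ∏ j, (if j = k then P else Q) (z j)) with hm
  have hA : ∀ A : (Fin (n+1) → Y) → Fin (n+1),
      shuffleSuccess (n+1) (fun i => if i = 0 then P else Q) A
        ≤ ((n+1 : ℕ) : ℝ)⁻¹ * ∑ z, m z := by
    intro A
    rw [shuffle_eq]
    have hpos : (0:ℝ) ≤ ((n+1 : ℕ) : ℝ)⁻¹ := by positivity
    apply mul_le_mul_of_nonneg_left _ hpos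
    apply Finset.sum_le_sum
    intro z _
    exact Finset.le_sup' (fun k => ∏ j, (if j = k then P else Q) (z j))
      (Finset.mem_univ (A z))
  have hbdd : BddAbove (Set.range fun A : (Fin (n+1) → Y) → Fin (n+1) =>
      shuffleSuccess (n+1) (fun i => if i = 0 then P else Q) A) := by
    refine ⟨((n+1 : ℕ) : ℝ)⁻¹ * ∑ z, m z, ?_⟩
    rintro _ ⟨A, rfl⟩
    exact hA A
  have hex : ∀ z : Fin (n+1) → Y, ∃ k : Fin (n+1),
      m z = ∏ j, (if j = k then P else Q) (z j) := by
    intro z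
    obtain ⟨k, -, hk⟩ := Finset.exists_mem_eq_sup' (Finset.univ_nonempty)
      (fun k : Fin (n+1) => ∏ j, (if j = k then P else Q) (z j))
    exact ⟨k, hk⟩
  set Astar : (Fin (n+1) → Y) → Fin (n+1) := fun z => (hex z).choose with hAstar
  have hAs : shuffleSuccess (n+1) (fun i => if i = 0 then P else Q) Astar
      = ((n+1 : ℕ) : ℝ)⁻¹ * ∑ z, m z := by
    rw [shuffle_eq]
    congr 1
    apply Finset.sum_congr rfl
    intro z _
    exact ((hex z).choose_spec).symm
  refine le_antisymm (ciSup_le hA) ?_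
  rw [← hAs]
  exact le_ciSup hbdd Astar

/-- If `P` is absolutely continuous w.r.t. `Q`, then `n · β_n(P,Q) → M`, where
`M = max_{y : Q y ≠ 0} P y / Q y`.  (The sequence is indexed by `n + 1` so that
the number of participants is always positive.) -/
theorem stmt8 {Y : Type*} [Fintype Y] (P Q : Y → ℝ)
    (hP0 : ∀ y, 0 ≤ P y) (hQ0 : ∀ y, 0 ≤ Q y)
    (hP1 : ∑ y, P y = 1) (hQ1 : ∑ y, Q y = 1)
    (hac : ∀ y, Q y = 0 → P y = 0)
    (hne : (Finset.univ.filter (fun y => Q y ≠ 0)).Nonempty) :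
    Filter.Tendsto (fun n : ℕ => ((n + 1 : ℕ) : ℝ) * betaN P Q (n + 1))
      Filter.atTop
      (nhds ((Finset.univ.filter (fun y => Q y ≠ 0)).sup' hne (fun y => P y / Q y))) := by
  classical
  set s := Finset.univ.filter (fun y => Q y ≠ 0) with hs
  set M := s.sup' hne (fun y => P y / Q y) with hM
  obtain ⟨ystar, hymem, hyeq⟩ := Finset.exists_mem_eq_sup' hne (fun y => P y / Q y)
  have hQy : Q ystar ≠ 0 := (Finset.mem_filter.mp hymem).2
  set q := Q ystar with hq
  have hq0 : 0 < q := lt_of_le_of_ne (hQ0 ystar) (Ne.symm hQy)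
  have hq1 : q ≤ 1 := by
    rw [← hQ1]
    exact Finset.single_le_sum (fun y _ => hQ0 y) (Finset.mem_univ ystar)
  have hM0 : 0 ≤ M := by
    rw [hM, hyeq]
    exact div_nonneg (hP0 ystar) (le_of_lt hq0)
  have hPy : P ystar = M * q := by
    rw [hM, hyeq]
    field_simp
  have hPle : ∀ y, P y ≤ M * Q y := by
    intro y
    by_cases hy : Q y = 0
    · rw [hac y hy, hy, mul_zero]
    · have hyQ : 0 < Q y := lt_of_le_of_ne (hQ0 y) (Ne.symm hy)
      have : P y / Q y ≤ M := Finset.le_sup' (fun y => P y / Q y)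
        (Finset.mem_filter.mpr ⟨Finset.mem_univ y, hy⟩)
      calc P y = (P y / Q y) * Q y := by field_simp
        _ ≤ M * Q y := mul_le_mul_of_nonneg_right this (le_of_lt hyQ)
  -- abbreviations
  set m : ∀ n : ℕ, (Fin (n+1) → Y) → ℝ := fun n z =>
    Finset.univ.sup' Finset.univ_nonempty
      (fun k => ∏ j, (if j = k then P else Q) (z j)) with hmdef
  have ht0 : ∀ (n : ℕ) (z : Fin (n+1) → Y) (k : Fin (n+1)),
      0 ≤ ∏ j, (if j = k then P else Q) (z j) := by
    intro n z k
    apply Finset.prod_nonneg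
    intro j _
    by_cases hj : j = k <;> simp [hj, hP0, hQ0]
  have htsplit : ∀ (n : ℕ) (z : Fin (n+1) → Y) (k : Fin (n+1)),
      (∏ j, (if j = k then P else Q) (z j))
        = P (z k) * ∏ j ∈ Finset.univ.erase k, Q (z j) := by
    intro n z k
    rw [← Finset.mul_prod_erase Finset.univ _ (Finset.mem_univ k)]
    simp only [if_pos rfl]
    congr 1
    apply Finset.prod_congr rfl
    intro j hj
    rw [if_neg (Finset.ne_of_mem_erase hj)]
  have hwprod : ∀ (n : ℕ) (z : Fin (n+1) → Y) (k : Fin (n+1)),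
      Q (z k) * ∏ j ∈ Finset.univ.erase k, Q (z j) = ∏ j, Q (z j) := by
    intro n z k
    exact Finset.mul_prod_erase Finset.univ (fun j => Q (z j)) (Finset.mem_univ k)
  have hm_le : ∀ (n : ℕ) (z : Fin (n+1) → Y), m n z ≤ M * ∏ j, Q (z j) := by
    intro n z
    apply Finset.sup'_le
    intro k _
    rw [htsplit n z k]
    calc P (z k) * ∏ j ∈ Finset.univ.erase k, Q (z j)
        ≤ (M * Q (z k)) * ∏ j ∈ Finset.univ.erase k, Q (z j) :=
          mul_le_mul_of_nonneg_right (hPle (z k))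
            (Finset.prod_nonneg fun j _ => hQ0 (z j))
      _ = M * ∏ j, Q (z j) := by rw [mul_assoc, hwprod n z k]
  have hm0 : ∀ (n : ℕ) (z : Fin (n+1) → Y), 0 ≤ m n z :=
    fun n z => le_trans (ht0 n z 0)
      (Finset.le_sup' (fun k : Fin (n+1) => ∏ j, (if j = k then P else Q) (z j))
        (Finset.mem_univ (0 : Fin (n+1))))
  have hsum_w : ∀ n : ℕ, (∑ z : Fin (n+1) → Y, ∏ j, Q (z j)) = 1 := by
    intro n
    rw [← Fintype.sum_pow Q (n+1), hQ1, one_pow]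
  -- the sequence equals Sn
  have hval : ∀ n : ℕ, ((n + 1 : ℕ) : ℝ) * betaN P Q (n + 1)
      = ∑ z : Fin (n+1) → Y, m n z := by
    intro n
    rw [betaN_eq, ← mul_assoc, mul_inv_cancel₀ (by positivity), one_mul]
  -- upper bound
  have hub : ∀ n : ℕ, (∑ z : Fin (n+1) → Y, m n z) ≤ M := by
    intro n
    calc (∑ z : Fin (n+1) → Y, m n z)
        ≤ ∑ z : Fin (n+1) → Y, M * ∏ j, Q (z j) :=
          Finset.sum_le_sum fun z _ => hm_le n z
      _ = M * ∑ z : Fin (n+1) → Y, ∏ j, Q (z j) := by rw [Finset.mul_sum]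
      _ = M := by rw [hsum_w, mul_one]
  -- lower bound
  have hmE : ∀ (n : ℕ) (z : Fin (n+1) → Y), (∃ k, z k = ystar) →
      M * ∏ j, Q (z j) ≤ m n z := by
    rintro n z ⟨k, hk⟩
    have : (∏ j, (if j = k then P else Q) (z j)) = M * ∏ j, Q (z j) := by
      rw [htsplit n z k, hk, hPy, mul_assoc, hq]
      rw [← hk]
      rw [hwprod n z k]
    rw [← this]
    exact Finset.le_sup' (fun k : Fin (n+1) => ∏ j, (if j = k then P else Q) (z j))
      (Finset.mem_univ k)
  have hEsum : ∀ n : ℕ,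
      (∑ z ∈ Finset.univ.filter (fun z : Fin (n+1) → Y => ∃ k, z k = ystar),
        ∏ j, Q (z j)) = 1 - (1-q)^(n+1) := by
    intro n
    have hsplit := Finset.sum_filter_add_sum_filter_not Finset.univ
      (fun z : Fin (n+1) → Y => ∃ k, z k = ystar) (fun z => ∏ j, Q (z j))
    have hnot : (∑ z ∈ Finset.univ.filter
        (fun z : Fin (n+1) → Y => ¬ ∃ k, z k = ystar), ∏ j, Q (z j))
        = (1-q)^(n+1) := by
      rw [Finset.sum_filter]
      have hpt : ∀ z : Fin (n+1) → Y,
          (if (¬ ∃ k, z k = ystar) then ∏ j, Q (z j) else 0)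
            = ∏ j, (if z j = ystar then 0 else Q (z j)) := by
        intro z
        by_cases hz : ∃ k, z k = ystar
        · rw [if_neg (not_not_intro hz)]
          obtain ⟨k, hk⟩ := hz
          exact (Finset.prod_eq_zero (Finset.mem_univ k) (by rw [if_pos hk])).symm
        · push_neg at hz
          rw [if_pos (by push_neg; exact hz)]
          exact (Finset.prod_congr rfl fun j _ => by rw [if_neg (hz j)]).symm
      rw [Finset.sum_congr rfl (fun z _ => hpt z)]
      have := Fintype.sum_pow (fun y => if y = ystar then 0 else Q y) (n+1)
      rw [← this]
      congr 1
      have : ∀ y, (if y = ystar then 0 else Q y)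
          = Q y - (if y = ystar then Q y else 0) := by
        intro y; by_cases hy : y = ystar <;> simp [hy]
      rw [Finset.sum_congr rfl (fun y _ => this y), Finset.sum_sub_distrib, hQ1,
        Finset.sum_ite_eq' Finset.univ ystar Q, if_pos (Finset.mem_univ ystar)]
    linarith [hsplit, hsum_w n, hnot]
  have hlb : ∀ n : ℕ, M * (1 - (1-q)^(n+1)) ≤ ∑ z : Fin (n+1) → Y, m n z := by
    intro n
    calc M * (1 - (1-q)^(n+1))
        = ∑ z ∈ Finset.univ.filter (fun z : Fin (n+1) → Y => ∃ k, z k = ystar),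
            M * ∏ j, Q (z j) := by rw [← Finset.mul_sum, hEsum n]
      _ ≤ ∑ z ∈ Finset.univ.filter (fun z : Fin (n+1) → Y => ∃ k, z k = ystar),
            m n z := Finset.sum_le_sum fun z hz =>
              hmE n z (Finset.mem_filter.mp hz).2
      _ ≤ ∑ z : Fin (n+1) → Y, m n z :=
          Finset.sum_le_sum_of_subset_of_nonneg (Finset.filter_subset _ _)
            (fun z _ _ => hm0 n z)
  -- squeeze
  have hpow : Filter.Tendsto (fun n : ℕ => (1-q)^(n+1)) Filter.atTop (nhds 0) := by
    have h01 : |1 - q| < 1 := abs_lt.mpr ⟨by linarith, by linarith⟩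
    have h := tendsto_pow_atTop_nhds_zero_of_abs_lt_one h01
    exact h.comp (Filter.tendsto_add_atTop_nat 1)
  have hlow : Filter.Tendsto (fun n : ℕ => M * (1 - (1-q)^(n+1)))
      Filter.atTop (nhds M) := by
    have hone : Filter.Tendsto (fun n : ℕ => 1 - (1-q)^(n+1)) Filter.atTop
        (nhds (1 - 0)) :=
      Filter.Tendsto.sub
        (tendsto_const_nhds : Filter.Tendsto (fun _ : ℕ => (1:ℝ)) _ _) hpow
    have h2 := hone.const_mul M
    simpa using h2
  have hseq : Filter.Tendsto (fun n : ℕ => ((n + 1 : ℕ) : ℝ) * betaN P Q (n + 1))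
      Filter.atTop (nhds M) := by
    apply tendsto_of_tendsto_of_tendsto_of_le_of_le hlow tendsto_const_nhds
    · intro n; exact le_trans (hlb n) (le_of_eq (hval n).symm)
    · intro n; exact le_trans (le_of_eq (hval n)) (hub n)
  exact hseq
end

section
/- Let P, Q be probability mass functions on a finite type with Q everywhere positive, and let G(t) = Pr_{y~Q}[P(y)/Q(y) ≤ t]. Then ∫₀^1 G(t) dt = Δ(P,Q), where Δ(P,Q) = (1/2)∑_y |P(y) − Q(y)| is the total variation distance. -/
open scoped Classical BigOperators

/-!
Writing `G t = ∑ y, Q y * 1[P y / Q y ≤ t]` and using `∫₀¹ 1[r ≤ t] dt = (1 - r)⁺` for `r ≥ 0`,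
the integral becomes `∑ y, (Q y - P y)⁺`. Since `P` and `Q` have the same total mass, the positive
and negative parts of `Q - P` have equal sums, so this is half of `∑ y, |P y - Q y|`.
-/

open MeasureTheory Set Finset

lemma intervalIntegral_indicator_Ici_const {a b : ℝ} (hab : a ≤ b) (r c : ℝ) :
    ∫ t in a..b, (Ici r).indicator (fun _ => c) t = max (b - max a r) 0 * c := by
  rw [intervalIntegral.integral_of_le hab, setIntegral_indicator measurableSet_Ici,
    setIntegral_const, smul_eq_mul,
    measureReal_congr ((ae_eq_refl _).inter Ioi_ae_eq_Ici.symm), Ioc_inter_Ioi,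
    Real.volume_real_Ioc]

lemma intervalIntegrable_indicator_Ici_const (a b r c : ℝ) :
    IntervalIntegrable ((Ici r).indicator fun _ => c) volume a b := by
  refine intervalIntegrable_iff.2 ((integrableOn_const ?_).indicator measurableSet_Ici)
  simp

lemma sum_max_sub_zero_eq_half_sum_abs {ι K : Type*} [Field K] [LinearOrder K]
    [IsStrictOrderedRing K] (s : Finset ι) {f g : ι → K}
    (hfg : ∑ i ∈ s, f i = ∑ i ∈ s, g i) :
    ∑ i ∈ s, max (g i - f i) 0 = 1 / 2 * ∑ i ∈ s, |f i - g i| := by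
  have hmax : ∀ i, max (g i - f i) 0 = ((g i - f i) + |f i - g i|) / 2 := by
    intro i
    rw [abs_sub_comm]
    rcases le_total 0 (g i - f i) with h | h
    · rw [max_eq_left h, abs_of_nonneg h]; ring
    · rw [max_eq_right h, abs_of_nonpos h]; ring
  simp only [hmax, ← sum_div, sum_add_distrib, sum_sub_distrib, hfg]
  ring

theorem stmt10 {Y : Type*} [Fintype Y] (P Q : Y → ℝ)
    (hP0 : ∀ y, 0 ≤ P y) (hQpos : ∀ y, 0 < Q y)
    (hP1 : ∑ y, P y = 1) (hQ1 : ∑ y, Q y = 1) :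
    (∫ t in (0:ℝ)..1, ∑ y ∈ Finset.univ.filter (fun y => P y / Q y ≤ t), Q y)
      = (1 / 2) * ∑ y, |P y - Q y| := by
  have hG : ∀ t, ∑ y ∈ univ.filter (fun y => P y / Q y ≤ t), Q y
      = ∑ y, (Ici (P y / Q y)).indicator (fun _ => Q y) t := by
    intro t
    simp only [sum_filter, indicator_apply, Set.mem_Ici]
  have hterm : ∀ y, ∫ t in (0:ℝ)..1, (Ici (P y / Q y)).indicator (fun _ => Q y) t
      = max (Q y - P y) 0 := by
    intro y
    rw [intervalIntegral_indicator_Ici_const zero_le_one,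
      max_eq_right (div_nonneg (hP0 y) (hQpos y).le), max_mul_of_nonneg _ _ (hQpos y).le,
      zero_mul, sub_mul, one_mul, div_mul_cancel₀ _ (hQpos y).ne']
  calc (∫ t in (0:ℝ)..1, ∑ y ∈ univ.filter (fun y => P y / Q y ≤ t), Q y)
      = ∑ y, ∫ t in (0:ℝ)..1, (Ici (P y / Q y)).indicator (fun _ => Q y) t := by
        simp only [hG]
        exact intervalIntegral.integral_finsetSum fun y _ =>
          intervalIntegrable_indicator_Ici_const _ _ _ _
    _ = ∑ y, max (Q y - P y) 0 := by simp only [hterm]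
    _ = 1 / 2 * ∑ y, |P y - Q y| := sum_max_sub_zero_eq_half_sum_abs _ (by rw [hP1, hQ1])
end

section
/- Let P, Q be probability mass functions on a finite type Y and n ≥ 1. Then the additive Bayesian advantage satisfies β_n(P,Q) − 1/n ≤ Δ(P,Q), where Δ is the total variation distance. -/
open scoped Classical BigOperators

lemma permCount {n : ℕ} [NeZero n] (c : Fin n) :
    (∑ σ : Equiv.Perm (Fin n), if c = σ.symm 0 then (1:ℝ) else 0)
    = (Nat.factorial n : ℝ) / n := by
  have hconst : ∀ c c' : Fin n,
      (∑ σ : Equiv.Perm (Fin n), if c = σ.symm 0 then (1:ℝ) else 0)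
      = ∑ σ : Equiv.Perm (Fin n), if c' = σ.symm 0 then (1:ℝ) else 0 := by
    intro c c'
    refine Fintype.sum_equiv (Equiv.mulRight (Equiv.swap c c')) _ _ ?_
    intro σ
    simp only [Equiv.coe_mulRight]
    congr 1
    simp only [eq_iff_iff, Equiv.eq_symm_apply, Equiv.Perm.mul_apply,
      Equiv.swap_apply_right]
  have hn : (n : ℝ) ≠ 0 := Nat.cast_ne_zero.mpr (NeZero.ne n)
  have htot : (n : ℝ) * (∑ σ : Equiv.Perm (Fin n), if c = σ.symm 0 then (1:ℝ) else 0)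
      = (Nat.factorial n : ℝ) := by
    have : ∑ c' : Fin n, (∑ σ : Equiv.Perm (Fin n), if c' = σ.symm 0 then (1:ℝ) else 0)
        = ∑ σ : Equiv.Perm (Fin n), (1:ℝ) := by
      rw [Finset.sum_comm]
      refine Finset.sum_congr rfl fun σ _ => ?_
      simp
    rw [Finset.sum_const, Finset.card_univ, Fintype.card_perm] at this
    calc (n : ℝ) * _ = ∑ c' : Fin n, (∑ σ : Equiv.Perm (Fin n), if c' = σ.symm 0 then (1:ℝ) else 0) := by
          rw [Finset.sum_congr rfl fun c' _ => (hconst c' c)]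
          simp [Finset.sum_const, Finset.card_univ, mul_comm]
      _ = (Nat.factorial n : ℝ) := by rw [this]; simp
  field_simp [hn] at htot ⊢
  linarith [htot]

lemma sumProd {Y : Type*} [Fintype Y] {n : ℕ} (f : Fin n → Y → ℝ) :
    ∑ z : Fin n → Y, ∏ i, f i (z i) = ∏ i, ∑ y, f i y := (Fintype.prod_sum f).symm

lemma allQ {Y : Type*} [Fintype Y] (Q : Y → ℝ) (hQ1 : ∑ y, Q y = 1)
    (n : ℕ) [NeZero n] (A : (Fin n → Y) → Fin n) :
    shuffleSuccess n (fun _ => Q) A = 1 / n := by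
  unfold shuffleSuccess
  have hσ : ∀ σ : Equiv.Perm (Fin n),
      (∑ y : Fin n → Y, (∏ i, Q (y i)) * (if A (fun i => y (σ i)) = σ.symm 0 then (1:ℝ) else 0))
      = ∑ z : Fin n → Y, (∏ i, Q (z i)) * (if A z = σ.symm 0 then 1 else 0) := by
    intro σ
    refine Fintype.sum_equiv (Equiv.arrowCongr σ.symm (Equiv.refl Y)) _ _ ?_
    intro y
    have h1 : ((σ.symm).arrowCongr (Equiv.refl Y)) y = fun i => y (σ i) := by
      funext i; simp [Equiv.arrowCongr_apply, Function.comp]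
    rw [h1, ← Equiv.prod_comp σ (fun i => Q (y i))]
  rw [Finset.sum_congr rfl fun σ _ => hσ σ, Finset.sum_comm]
  have : ∀ z : Fin n → Y,
      (∑ σ : Equiv.Perm (Fin n), (∏ i, Q (z i)) * (if A z = σ.symm 0 then (1:ℝ) else 0))
      = (∏ i, Q (z i)) * ((Nat.factorial n : ℝ) / n) := by
    intro z
    rw [← Finset.mul_sum, permCount (A z)]
  rw [Finset.sum_congr rfl fun z _ => this z, ← Finset.sum_mul, sumProd (fun _ => Q)]
  have hfac : (Nat.factorial n : ℝ) ≠ 0 := Nat.cast_ne_zero.mpr (Nat.factorial_ne_zero n)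
  rw [hQ1]
  simp
  field_simp

lemma keyBound {Y : Type*} [Fintype Y] (P Q : Y → ℝ)
    (hQ0 : ∀ y, 0 ≤ Q y) (hQ1 : ∑ y, Q y = 1)
    (n : ℕ) [NeZero n] (A : (Fin n → Y) → Fin n) :
    shuffleSuccess n (fun i => if i = 0 then P else Q) A
      ≤ 1 / n + ∑ y, max (P y - Q y) 0 := by
  set M := ∑ y, max (P y - Q y) 0 with hM
  have hfacpos : (0:ℝ) < (Nat.factorial n : ℝ) := by
    exact_mod_cast Nat.factorial_pos n
  rw [← allQ Q hQ1 n A]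
  unfold shuffleSuccess
  have hR : ∀ y : Fin n → Y, 0 ≤ ∏ i ∈ Finset.univ.erase 0, Q (y i) :=
    fun y => Finset.prod_nonneg fun i _ => hQ0 _
  have hsplit : ∀ (f : Y → ℝ) (y : Fin n → Y),
      ∏ i, (if i = (0:Fin n) then f else Q) (y i)
        = f (y 0) * ∏ i ∈ Finset.univ.erase 0, Q (y i) := by
    intro f y
    rw [← Finset.mul_prod_erase Finset.univ _ (Finset.mem_univ (0 : Fin n))]
    simp only [if_pos rfl]
    congr 1
    refine Finset.prod_congr rfl fun i hi => ?_
    rw [if_neg (Finset.mem_erase.mp hi).1]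
  have hMsum : ∀ σ : Equiv.Perm (Fin n),
      (∑ y : Fin n → Y, max (P (y 0) - Q (y 0)) 0 * ∏ i ∈ Finset.univ.erase 0, Q (y i)) = M := by
    intro σ
    have : ∀ y : Fin n → Y,
        max (P (y 0) - Q (y 0)) 0 * ∏ i ∈ Finset.univ.erase 0, Q (y i)
          = ∏ i, (if i = (0:Fin n) then (fun v => max (P v - Q v) 0) else Q) (y i) := by
      intro y; rw [hsplit (fun v => max (P v - Q v) 0) y]
    rw [Finset.sum_congr rfl fun y _ => this y, ← Fintype.prod_sum]
    have : ∀ i : Fin n, (∑ v, (if i = (0:Fin n) then (fun v => max (P v - Q v) 0) else Q) v)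
        = if i = 0 then M else 1 := by
      intro i
      by_cases h : i = 0 <;> simp [h, hQ1, hM]
    rw [Finset.prod_congr rfl fun i _ => this i]
    simp
  have hperσ : ∀ σ : Equiv.Perm (Fin n),
      (∑ y : Fin n → Y, (∏ i, (if i = (0:Fin n) then P else Q) (y i)) *
          (if A (fun i => y (σ i)) = σ.symm 0 then (1:ℝ) else 0))
      ≤ (∑ y : Fin n → Y, (∏ i, Q (y i)) *
          (if A (fun i => y (σ i)) = σ.symm 0 then (1:ℝ) else 0)) + M := by
    intro σ
    rw [← hMsum σ, ← Finset.sum_add_distrib]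
    refine Finset.sum_le_sum fun y _ => ?_
    rw [hsplit P y]
    have hQprod : ∏ i, Q (y i) = Q (y 0) * ∏ i ∈ Finset.univ.erase 0, Q (y i) := by
      simpa using hsplit Q y
    rw [hQprod]
    set R := ∏ i ∈ Finset.univ.erase 0, Q (y i) with hRdef
    set ind : ℝ := if A (fun i => y (σ i)) = σ.symm 0 then (1:ℝ) else 0 with hind
    have hind01 : 0 ≤ ind ∧ ind ≤ 1 := by
      constructor <;> (rw [hind]; split <;> norm_num)
    have h1 : P (y 0) * R * ind - Q (y 0) * R * ind = (P (y 0) - Q (y 0)) * R * ind := by ring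
    have h2 : (P (y 0) - Q (y 0)) * R * ind ≤ max (P (y 0) - Q (y 0)) 0 * R := by
      calc (P (y 0) - Q (y 0)) * R * ind ≤ max (P (y 0) - Q (y 0)) 0 * R * ind := by
            apply mul_le_mul_of_nonneg_right _ hind01.1
            exact mul_le_mul_of_nonneg_right (le_max_left _ _) (hR y)
        _ ≤ max (P (y 0) - Q (y 0)) 0 * R * 1 := by
            apply mul_le_mul_of_nonneg_left hind01.2
            exact mul_nonneg (le_max_right _ _) (hR y)
        _ = max (P (y 0) - Q (y 0)) 0 * R := by ring
    linarith
  calc (Nat.factorial n : ℝ)⁻¹ * ∑ σ : Equiv.Perm (Fin n), ∑ y : Fin n → Y,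
        (∏ i, (if i = (0:Fin n) then P else Q) (y i)) *
          (if A (fun i => y (σ i)) = σ.symm 0 then (1:ℝ) else 0)
      ≤ (Nat.factorial n : ℝ)⁻¹ * ∑ σ : Equiv.Perm (Fin n),
          ((∑ y : Fin n → Y, (∏ i, Q (y i)) *
            (if A (fun i => y (σ i)) = σ.symm 0 then (1:ℝ) else 0)) + M) := by
        apply mul_le_mul_of_nonneg_left _ (inv_nonneg.mpr hfacpos.le)
        exact Finset.sum_le_sum fun σ _ => hperσ σ
    _ = (Nat.factorial n : ℝ)⁻¹ * ((∑ σ : Equiv.Perm (Fin n), ∑ y : Fin n → Y,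
          (∏ i, Q (y i)) * (if A (fun i => y (σ i)) = σ.symm 0 then (1:ℝ) else 0)) + M * (Nat.factorial n : ℝ)) := by
        rw [Finset.sum_add_distrib, Finset.sum_const, Finset.card_univ, Fintype.card_perm,
          nsmul_eq_mul, Fintype.card_fin]
        ring
    _ = (Nat.factorial n : ℝ)⁻¹ * (∑ σ : Equiv.Perm (Fin n), ∑ y : Fin n → Y,
          (∏ i, Q (y i)) * (if A (fun i => y (σ i)) = σ.symm 0 then (1:ℝ) else 0)) + M := by
        field_simp

theorem stmt12 {Y : Type*} [Fintype Y] (P Q : Y → ℝ)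
    (hP0 : ∀ y, 0 ≤ P y) (hQ0 : ∀ y, 0 ≤ Q y)
    (hP1 : ∑ y, P y = 1) (hQ1 : ∑ y, Q y = 1)
    (n : ℕ) [NeZero n] :
    betaN P Q n - 1 / n ≤ (1 / 2) * ∑ y, |P y - Q y| := by
  have hMhalf : ∑ y, max (P y - Q y) 0 = (1 / 2) * ∑ y, |P y - Q y| := by
    have h : ∀ y, max (P y - Q y) 0 = ((P y - Q y) + |P y - Q y|) / 2 := by
      intro y
      rcases le_total (P y - Q y) 0 with h | h
      · rw [max_eq_right h, abs_of_nonpos h]; ring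
      · rw [max_eq_left h, abs_of_nonneg h]; ring
    rw [Finset.sum_congr rfl fun y _ => h y, ← Finset.sum_div]
    have h2 : ∑ y, ((P y - Q y) + |P y - Q y|) = ∑ y, |P y - Q y| := by
      rw [Finset.sum_add_distrib, Finset.sum_sub_distrib, hP1, hQ1]
      ring
    rw [h2]
    ring
  have hsup : betaN P Q n ≤ 1 / n + ∑ y, max (P y - Q y) 0 := by
    have : Nonempty ((Fin n → Y) → Fin n) := ⟨fun _ => 0⟩
    exact ciSup_le fun A => keyBound P Q hQ0 hQ1 n A
  rw [hMhalf] at hsup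
  linarith
end

section
/- Let G : [1,M] → [0,1] be integrable with ∫₁^M G(t) dt = M − 1 + a − d for reals a ∈ [0,1], d ∈ [0,1] with M > 1 and a − d ≥ −(M−1). Then for every n ≥ 1, (1/n)(M − 1 − ∫₁^M G(t)^n dt) + a ≤ d. -/
open MeasureTheory

theorem stmt13 (G : ℝ → ℝ) (M a d : ℝ) (hM : 1 < M)
    (ha : a ∈ Set.Icc (0:ℝ) 1) (hd : d ∈ Set.Icc (0:ℝ) 1)
    (had : -(M - 1) ≤ a - d)
    (hG0 : ∀ t ∈ Set.Icc (1:ℝ) M, 0 ≤ G t)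
    (hG1 : ∀ t ∈ Set.Icc (1:ℝ) M, G t ≤ 1)
    (hint : IntervalIntegrable G volume 1 M)
    (hI : ∫ t in (1:ℝ)..M, G t = M - 1 + a - d)
    (n : ℕ) (hn : 1 ≤ n)
    (hintn : IntervalIntegrable (fun t => G t ^ n) volume 1 M) :
    (n : ℝ)⁻¹ * (M - 1 - ∫ t in (1:ℝ)..M, G t ^ n) + a ≤ d := by
  have hnpos : (0:ℝ) < n := by exact_mod_cast hn
  have hintL : IntervalIntegrable (fun t => 1 + (n:ℝ) * (G t - 1)) volume 1 M := by
    apply IntervalIntegrable.add intervalIntegrable_const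
    exact ((hint.sub intervalIntegrable_const).const_mul _)
  have hmono : (∫ t in (1:ℝ)..M, (1 + (n:ℝ) * (G t - 1))) ≤ ∫ t in (1:ℝ)..M, G t ^ n := by
    apply intervalIntegral.integral_mono_on hM.le hintL hintn
    intro t ht
    have h0 := hG0 t ht
    have key := one_add_mul_le_pow (a := G t - 1) (by linarith) n
    simpa using key
  have hcalc : (∫ t in (1:ℝ)..M, (1 + (n:ℝ) * (G t - 1)))
      = (M - 1) + (n:ℝ) * (a - d) := by
    rw [intervalIntegral.integral_add intervalIntegrable_const
        ((hint.sub intervalIntegrable_const).const_mul _),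
      intervalIntegral.integral_const_mul,
      intervalIntegral.integral_sub hint intervalIntegrable_const,
      intervalIntegral.integral_const, hI]
    simp only [smul_eq_mul, mul_one]
    ring
  rw [hcalc] at hmono
  have h1 : (n:ℝ)⁻¹ * (n:ℝ) = 1 := inv_mul_cancel₀ hnpos.ne'
  nlinarith [mul_le_mul_of_nonneg_left hmono (inv_nonneg.mpr hnpos.le)]
end

section
/- Let R : X → PMF Y be an ε-differentially-private local randomizer on finite types X, Y, i.e., Pr[R(x)=y] ≤ e^ε · Pr[R(x')=y] for all x, x', y. Then for each fixed x₁, there exists for every x ∈ X a probability mass function LO(x) on Y such that R(x) = e^{-ε}·R(x₁) + (1 − e^{-ε})·LO(x) as a convex mixture of distributions. -/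
/-- The component `r` with `p = c • q + (1 - c) • r`. -/
noncomputable def mixtureResidual {Y : Type*} (c : ℝ) (p q : Y → ℝ) (y : Y) : ℝ :=
  (p y - c * q y) / (1 - c)

section MixtureResidual

variable {Y : Type*} {c : ℝ} {p q : Y → ℝ}

lemma mixtureResidual_nonneg (hc : c < 1) {y : Y} (h : c * q y ≤ p y) :
    0 ≤ mixtureResidual c p q y :=
  div_nonneg (sub_nonneg.mpr h) (sub_pos.mpr hc).le

lemma sum_mixtureResidual [Fintype Y] (hc : c ≠ 1) (hp : ∑ y, p y = 1) (hq : ∑ y, q y = 1) :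
    ∑ y, mixtureResidual c p q y = 1 := by
  have hc' : 1 - c ≠ 0 := sub_ne_zero.mpr hc.symm
  simp only [mixtureResidual, ← Finset.sum_div, Finset.sum_sub_distrib, ← Finset.mul_sum, hp, hq,
    mul_one, div_self hc']

lemma eq_mix_mixtureResidual (hc : c ≠ 1) (y : Y) :
    p y = c * q y + (1 - c) * mixtureResidual c p q y := by
  have hc' : 1 - c ≠ 0 := sub_ne_zero.mpr hc.symm
  rw [mixtureResidual, mul_div_cancel₀ _ hc']
  ring

end MixtureResidual

lemma exp_neg_mul_le_of_le_exp_mul {ε a b : ℝ} (h : a ≤ Real.exp ε * b) :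
    Real.exp (-ε) * a ≤ b := by
  rw [Real.exp_neg, inv_mul_le_iff₀ (Real.exp_pos ε)]
  exact h

theorem stmt15_general {X Y : Type*} [Fintype Y] (ε : ℝ) (hε : 0 < ε)
    (R : X → Y → ℝ)
    (hR1 : ∀ x, ∑ y, R x y = 1)
    (hDP : ∀ x x' y, R x y ≤ Real.exp ε * R x' y)
    (x₁ : X) :
    ∃ LO : X → Y → ℝ,
      (∀ x, (∀ y, 0 ≤ LO x y) ∧ ∑ y, LO x y = 1) ∧
      (∀ x y, R x y = Real.exp (-ε) * R x₁ y + (1 - Real.exp (-ε)) * LO x y) := by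
  have hlt : Real.exp (-ε) < 1 := Real.exp_lt_one_iff.mpr (neg_neg_of_pos hε)
  refine ⟨fun x => mixtureResidual (Real.exp (-ε)) (R x) (R x₁), fun x => ⟨fun y => ?_, ?_⟩,
    fun x y => eq_mix_mixtureResidual hlt.ne y⟩
  · exact mixtureResidual_nonneg hlt (exp_neg_mul_le_of_le_exp_mul (hDP x₁ x y))
  · exact sum_mixtureResidual hlt.ne (hR1 x) (hR1 x₁)

/-- Clone decomposition: an `ε`-DP local randomizer `R` can be written, for any
fixed reference input `x₁`, as the mixture
`R x = e^{-ε} · R x₁ + (1 − e^{-ε}) · LO x` where each `LO x` is a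
probability mass function. -/
theorem stmt15 {X Y : Type*} [Fintype X] [Fintype Y] (ε : ℝ) (hε : 0 < ε)
    (R : X → Y → ℝ)
    (hR0 : ∀ x y, 0 ≤ R x y) (hR1 : ∀ x, ∑ y, R x y = 1)
    (hDP : ∀ x x' y, R x y ≤ Real.exp ε * R x' y)
    (x₁ : X) :
    ∃ LO : X → Y → ℝ,
      (∀ x, (∀ y, 0 ≤ LO x y) ∧ ∑ y, LO x y = 1) ∧
      (∀ x y, R x y = Real.exp (-ε) * R x₁ y + (1 - Real.exp (-ε)) * LO x y) :=
  stmt15_general ε hε R hR1 hDP x₁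
end

section
/- Let R : X → PMF Y be an ε-DP local randomizer on finite types. In the shuffle re-identification game (inputs x₁,…,x_n, outputs y_i ~ R(x_i) independently, uniformly random permutation σ, adversary sees the shuffled output vector and must output σ⁻¹(1)), the success probability of every adversary is at most e^ε / n, for every choice of inputs x₁,…,x_n. -/
/-!
Put `δ = exp (-ε)`. Differential privacy gives `δ • R (x 0) ≤ R (x i)`, so each user's output
law is the mixture `δ • R (x 0) + (R (x i) - δ • R (x 0))`: every user other than the target
independently draws from the target's law `R (x 0)` with probability `δ`. Conditionally on the set
`S` of such users, the `#S + 1` users drawing from `R (x 0)` are exchangeable under the shuffle,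
so no adversary finds the target with probability above `1 / (#S + 1)`. Averaging over
`#S ~ Bin(n - 1, δ)` gives `E[1 / (#S + 1)] = (1 - (1 - δ) ^ n) / (n δ) ≤ exp ε / n`.
-/

open scoped Classical BigOperators

open Finset

theorem prod_eq_sum_powerset_erase {ι R : Type*} [Fintype ι] [DecidableEq ι] [CommRing R]
    (a b : ι → R) (t : ι) (δ : R) (hab : a t = b t) :
    ∏ i, a i = ∑ S ∈ (univ.erase t).powerset,
      δ ^ #S * ∏ i, if i ∈ insert t S then b i else a i - δ * b i := by
  calc ∏ i, a i = b t * ∏ i ∈ univ.erase t, (δ * b i + (a i - δ * b i)) := by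
        rw [← hab, ← mul_prod_erase univ a (mem_univ t)]
        simp only [add_sub_cancel]
    _ = _ := by
        rw [prod_add, mul_sum]
        refine sum_congr rfl fun S hS => ?_
        have hSE : S ⊆ univ.erase t := mem_powerset.1 hS
        have htS : t ∉ S := fun h => by simpa using hSE h
        have hcompl : univ.filter (fun i => i ∉ insert t S) = univ.erase t \ S := by
          ext i; simp [not_or, and_comm]
        rw [prod_ite, filter_mem_eq_inter, univ_inter, hcompl, prod_insert htS,
          prod_mul_distrib, prod_const]
        ring

theorem mul_sum_range_choose_div_succ (m : ℕ) (p : ℝ) :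
    (m + 1) * p * ∑ k ∈ range (m + 1), m.choose k * p ^ k * (1 - p) ^ (m - k) / (k + 1)
      = 1 - (1 - p) ^ (m + 1) := by
  have hterm : ∀ k ∈ range (m + 1),
      (m + 1) * p * (m.choose k * p ^ k * (1 - p) ^ (m - k) / (k + 1))
        = p ^ (k + 1) * (1 - p) ^ (m + 1 - (k + 1)) * (m + 1).choose (k + 1) := by
    intro k _
    have hchoose : ((m : ℝ) + 1) * m.choose k = (m + 1).choose (k + 1) * ((k : ℝ) + 1) := by
      exact_mod_cast Nat.add_one_mul_choose_eq m k
    rw [Nat.add_sub_add_right]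
    field_simp
    linear_combination p ^ (k + 1) * (1 - p) ^ (m - k) * hchoose
  rw [mul_sum, sum_congr rfl hterm]
  have hbinom := add_pow p (1 - p) (m + 1)
  rw [add_sub_cancel, one_pow, sum_range_succ'] at hbinom
  simp only [pow_zero, Nat.sub_zero, Nat.choose_zero_right, Nat.cast_one, one_mul,
    mul_one] at hbinom
  linarith

namespace ShuffleGame

variable {ι Y : Type*} [Fintype ι] [DecidableEq ι] [Fintype Y]

noncomputable def winMass (P : ι → Y → ℝ) (A : (ι → Y) → ι) (t : ι) : ℝ :=
  ∑ σ : Equiv.Perm ι, ∑ y : ι → Y,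
    (∏ i, P i (y i)) * if A (fun i => y (σ i)) = σ.symm t then 1 else 0

variable {P : ι → Y → ℝ} {A : (ι → Y) → ι}

theorem winMass_nonneg (hP : ∀ i v, 0 ≤ P i v) (t : ι) : 0 ≤ winMass P A t :=
  sum_nonneg fun _ _ => sum_nonneg fun _ _ =>
    mul_nonneg (prod_nonneg fun _ _ => hP _ _) (by split_ifs <;> norm_num)

theorem sum_winMass (P : ι → Y → ℝ) (A : (ι → Y) → ι) :
    ∑ t, winMass P A t = (Fintype.card ι).factorial * ∏ i, ∑ v, P i v := by
  have hone : ∀ (σ : Equiv.Perm ι) (z : ι → Y),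
      ∑ t, (if A z = σ.symm t then (1 : ℝ) else 0) = 1 := fun σ z => by
    simp [Equiv.eq_symm_apply]
  calc ∑ t, winMass P A t = ∑ _σ : Equiv.Perm ι, ∑ y : ι → Y, ∏ i, P i (y i) := by
        simp only [winMass]
        rw [sum_comm]
        refine sum_congr rfl fun σ _ => ?_
        rw [sum_comm]
        exact sum_congr rfl fun y _ => by rw [← mul_sum, hone, mul_one]
    _ = _ := by
        rw [sum_const, card_univ, Fintype.card_perm, nsmul_eq_mul, Fintype.prod_sum]

theorem winMass_apply_perm (π : Equiv.Perm ι) (hπ : ∀ i, P (π i) = P i) (t : ι) :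
    winMass P A (π t) = winMass P A t := by
  unfold winMass
  rw [← Equiv.sum_comp (Equiv.mulLeft π)]
  refine sum_congr rfl fun σ _ => ?_
  rw [← Equiv.sum_comp (π.arrowCongr (Equiv.refl Y))]
  refine sum_congr rfl fun y _ => ?_
  have hprod : ∏ i, P i (y (π.symm i)) = ∏ i, P i (y i) := by
    rw [← Equiv.prod_comp π]
    simp only [hπ, Equiv.symm_apply_apply]
  simp [Equiv.Perm.mul_def, hprod]

theorem card_mul_winMass_le (hP : ∀ i v, 0 ≤ P i v) (t : ι) (C : Finset ι)
    (hC : ∀ c ∈ C, P c = P t) :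
    #C * winMass P A t ≤ (Fintype.card ι).factorial * ∏ i, ∑ v, P i v := by
  have hswap : ∀ c ∈ C, winMass P A c = winMass P A t := fun c hc => by
    have hπ : ∀ i, P (Equiv.swap t c i) = P i := fun i => by
      rcases eq_or_ne i t with rfl | hit
      · rw [Equiv.swap_apply_left, hC c hc]
      rcases eq_or_ne i c with rfl | hic
      · rw [Equiv.swap_apply_right, hC i hc]
      · rw [Equiv.swap_apply_of_ne_of_ne hit hic]
    simpa using winMass_apply_perm (A := A) _ hπ t
  calc #C * winMass P A t = ∑ c ∈ C, winMass P A c := by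
        rw [sum_congr rfl hswap, sum_const, nsmul_eq_mul]
    _ ≤ ∑ c, winMass P A c := sum_le_univ_sum_of_nonneg fun c => winMass_nonneg hP c
    _ = _ := sum_winMass P A

noncomputable def mixture (P : ι → Y → ℝ) (δ : ℝ) (t : ι) (S : Finset ι) :
    ι → Y → ℝ := fun i v => if i ∈ insert t S then P t v else P i v - δ * P t v

theorem winMass_eq_sum_mixture (P : ι → Y → ℝ) (A : (ι → Y) → ι) (δ : ℝ) (t : ι) :
    winMass P A t
      = ∑ S ∈ (univ.erase t).powerset, δ ^ #S * winMass (mixture P δ t S) A t := by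
  have hprod : ∀ y : ι → Y, ∏ i, P i (y i) = ∑ S ∈ (univ.erase t).powerset,
      δ ^ #S * ∏ i, mixture P δ t S i (y i) := fun y =>
    prod_eq_sum_powerset_erase (fun i => P i (y i)) (fun i => P t (y i)) t δ rfl
  simp only [winMass, hprod, sum_mul, mul_sum, mul_assoc]
  exact (sum_congr rfl fun σ _ => sum_comm).trans sum_comm

theorem winMass_mixture_le (hP0 : ∀ i v, 0 ≤ P i v) (hP1 : ∀ i, ∑ v, P i v = 1) {δ : ℝ}
    {t : ι} (hPδ : ∀ i v, δ * P t v ≤ P i v) (S : Finset ι) (htS : t ∉ S) :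
    winMass (mixture P δ t S) A t
      ≤ (Fintype.card ι).factorial * (1 - δ) ^ (Fintype.card ι - (#S + 1)) / (#S + 1) := by
  have hnonneg : ∀ i v, 0 ≤ mixture P δ t S i v := fun i v => by
    unfold mixture
    split_ifs
    · exact hP0 t v
    · exact sub_nonneg.2 (hPδ i v)
  have hmass : ∀ i, ∑ v, mixture P δ t S i v = if i ∈ insert t S then 1 else 1 - δ :=
      fun i => by
    unfold mixture
    split_ifs
    · exact hP1 t
    · rw [sum_sub_distrib, ← mul_sum, hP1, hP1, mul_one]
  have hbound := card_mul_winMass_le (A := A) hnonneg t (insert t S)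
    (fun c hc => funext fun v => by simp [mixture, hc])
  simp only [hmass, prod_ite, prod_const_one, one_mul, prod_const, filter_not,
    filter_mem_eq_inter, univ_inter, ← compl_eq_univ_sdiff, card_compl,
    card_insert_of_notMem htS] at hbound
  rw [le_div_iff₀ (by positivity), mul_comm]
  exact_mod_cast hbound

theorem winMass_le (hP0 : ∀ i v, 0 ≤ P i v) (hP1 : ∀ i, ∑ v, P i v = 1) {δ : ℝ}
    (hδ : 0 < δ) {t : ι} (hPδ : ∀ i v, δ * P t v ≤ P i v) :
    winMass P A t ≤ (Fintype.card ι).factorial / (Fintype.card ι * δ) := by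
  set n := Fintype.card ι
  set m := #(univ.erase t)
  have hn : n = m + 1 := by
    have hpos : 0 < n := Fintype.card_pos_iff.2 ⟨t⟩
    have hm : m = n - 1 := by simp [m, n, card_erase_of_mem]
    omega
  have hδ1 : δ ≤ 1 := by
    have h := sum_le_sum fun v (_ : v ∈ univ) => hPδ t v
    rwa [← mul_sum, hP1, mul_one] at h
  calc winMass P A t
      = ∑ S ∈ (univ.erase t).powerset, δ ^ #S * winMass (mixture P δ t S) A t :=
        winMass_eq_sum_mixture P A δ t
    _ ≤ ∑ S ∈ (univ.erase t).powerset,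
          δ ^ #S * (n.factorial * (1 - δ) ^ (n - (#S + 1)) / (#S + 1)) :=
        sum_le_sum fun S hS => mul_le_mul_of_nonneg_left
          (winMass_mixture_le hP0 hP1 hPδ S fun htS => by simpa using mem_powerset.1 hS htS)
          (by positivity)
    _ = n.factorial *
          ∑ k ∈ range (m + 1), m.choose k * δ ^ k * (1 - δ) ^ (m - k) / (k + 1) := by
        rw [sum_powerset_apply_card
          (fun k => δ ^ k * (n.factorial * (1 - δ) ^ (n - (k + 1)) / (k + 1))), mul_sum]
        refine sum_congr rfl fun k _ => ?_
        rw [hn, Nat.add_sub_add_right, nsmul_eq_mul]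
        ring
    _ = n.factorial * (1 - (1 - δ) ^ (m + 1)) / ((m + 1) * δ) := by
        rw [← mul_sum_range_choose_div_succ]
        field_simp
    _ ≤ n.factorial / (n * δ) := by
        rw [hn]
        push_cast
        gcongr
        exact mul_le_of_le_one_right (by positivity)
          (sub_le_self _ (pow_nonneg (sub_nonneg.2 hδ1) _))

end ShuffleGame

theorem stmt16_general {X Y : Type*} [Fintype Y] (ε : ℝ)
    (R : X → Y → ℝ)
    (hR0 : ∀ x y, 0 ≤ R x y) (hR1 : ∀ x, ∑ y, R x y = 1)
    (hDP : ∀ x x' y, R x y ≤ Real.exp ε * R x' y)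
    (n : ℕ) [NeZero n] (x : Fin n → X) (A : (Fin n → Y) → Fin n) :
    shuffleSuccess n (fun i => R (x i)) A ≤ Real.exp ε / n := by
  have hδ : ∀ i v, Real.exp (-ε) * R (x 0) v ≤ R (x i) v := fun i v => by
    rw [Real.exp_neg, inv_mul_le_iff₀ (Real.exp_pos ε)]
    exact hDP _ _ v
  have hwin := ShuffleGame.winMass_le (A := A) (fun i => hR0 (x i)) (fun i => hR1 (x i))
    (Real.exp_pos (-ε)) hδ
  rw [Fintype.card_fin] at hwin
  calc shuffleSuccess n (fun i => R (x i)) A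
      = (n.factorial : ℝ)⁻¹ * ShuffleGame.winMass (fun i => R (x i)) A 0 := rfl
    _ ≤ (n.factorial : ℝ)⁻¹ * (n.factorial / (n * Real.exp (-ε))) := by gcongr
    _ = Real.exp ε / n := by
        rw [Real.exp_neg]
        field_simp

/-- If the local randomizer `R` is `ε`-DP, every adversary in the shuffle
re-identification game succeeds with probability at most `e^ε / n`, for every
choice of inputs. -/
theorem stmt16 {X Y : Type*} [Fintype X] [Fintype Y] (ε : ℝ)
    (R : X → Y → ℝ)
    (hR0 : ∀ x y, 0 ≤ R x y) (hR1 : ∀ x, ∑ y, R x y = 1)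
    (hDP : ∀ x x' y, R x y ≤ Real.exp ε * R x' y)
    (n : ℕ) [NeZero n] (x : Fin n → X) (A : (Fin n → Y) → Fin n) :
    shuffleSuccess n (fun i => R (x i)) A ≤ Real.exp ε / n :=
  stmt16_general ε R hR0 hR1 hDP n x A
end

section
/- Let R : X → PMF Y on finite types, fix x₁ ∈ X, and let M = max_y Pr[R(x₁)=y] / (min_{x∈X} Pr[R(x)=y]) (assume the denominator is positive for all y). Then for every n ≥ 1 and every input vector with first coordinate x₁, every adversary in the shuffle re-identification game succeeds with probability at most M/n. -/
open scoped Classical BigOperators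

section BlanketBound

open Finset Equiv Nat

variable {ι Y R : Type*} [Fintype ι] [DecidableEq ι]

/-- The term of the blanket decomposition of `∏ j, (q + r j) (z j)` in which exactly the
positions in `S` draw from the blanket `q`. -/
def blanketProd [CommSemiring R] (q : Y → R) (r : ι → Y → R) (S : Finset ι) (z : ι → Y) : R :=
  (∏ j ∈ S, q (z j)) * ∏ j ∈ Sᶜ, r j (z j)

section CommSemiring

variable [CommSemiring R] (q : Y → R) (r : ι → Y → R)

theorem prod_add_eq_sum_blanketProd (z : ι → Y) :
    ∏ j, (q (z j) + r j (z j)) = ∑ S, blanketProd q r S z :=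
  Fintype.prod_add _ _

theorem mul_prod_erase_add_eq_sum_blanketProd (z : ι → Y) (a : ι) :
    q (z a) * ∏ j ∈ univ.erase a, (q (z j) + r j (z j)) =
      ∑ S, if a ∈ S then blanketProd q r S z else 0 := by
  -- with `r' a = 0` the terms of the full expansion with `a ∉ S` vanish
  obtain ⟨r', hr'a, hr'⟩ : ∃ r' : ι → Y → R, r' a = 0 ∧ ∀ j ≠ a, r' j = r j :=
    ⟨Function.update r a 0, by simp, fun j hj => Function.update_of_ne hj _ _⟩
  calc q (z a) * ∏ j ∈ univ.erase a, (q (z j) + r j (z j))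
      = ∏ j, (q (z j) + r' j (z j)) := by
        rw [← mul_prod_erase univ _ (mem_univ a), hr'a, Pi.zero_apply, add_zero]
        congr 1
        exact prod_congr rfl fun j hj => by rw [hr' j (ne_of_mem_erase hj)]
    _ = ∑ S, if a ∈ S then blanketProd q r S z else 0 := by
        rw [prod_add_eq_sum_blanketProd]
        refine sum_congr rfl fun S _ => ?_
        split_ifs with ha
        · refine congrArg _ (prod_congr rfl fun j hj => ?_)
          rw [hr' j (by rintro rfl; exact (mem_compl.1 hj) ha)]
        · exact mul_eq_zero_of_right _
            (prod_eq_zero (mem_compl.2 ha) (by simp [hr'a]))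

theorem sum_blanketProd [Fintype Y] {β : R} (hr : ∀ j, ∑ y, r j y = β) (S : Finset ι) :
    ∑ z, blanketProd q r S z = (∑ y, q y) ^ #S * β ^ (Fintype.card ι - #S) := by
  let f : ι → Y → R := fun j => if j ∈ S then q else r j
  have hsplit : ∀ g : ι → R, (∏ j ∈ S, g j) * ∏ j ∈ Sᶜ, g j = ∏ j, g j := prod_mul_prod_compl S
  calc ∑ z, blanketProd q r S z = ∑ z : ι → Y, ∏ j, f j (z j) := by
        refine sum_congr rfl fun z _ => ?_
        rw [← hsplit, blanketProd]
        congr 1 <;> refine prod_congr rfl fun j hj => ?_ <;> simp_all [f]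
    _ = ∏ j, ∑ y, f j y := (Fintype.prod_sum f).symm
    _ = (∑ y, q y) ^ #S * β ^ (Fintype.card ι - #S) := by
        rw [← hsplit, ← card_compl, ← prod_const, ← prod_const]
        congr 1 <;> refine prod_congr rfl fun j hj => ?_ <;> simp_all [f]

theorem blanketProd_comp_of_forall_notMem {S : Finset ι} {τ : ι → ι} (hτ : ∀ j ∉ S, τ j = j) :
    blanketProd q (r ∘ τ) S = blanketProd q r S := by
  funext z
  refine congrArg _ (prod_congr rfl fun j hj => ?_)
  rw [Function.comp_apply, hτ j (mem_compl.1 hj)]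

theorem sum_perm_apply_eq_blanketProd_congr (z : ι → Y) (t : ι) {S : Finset ι} {a b : ι}
    (ha : a ∈ S) (hb : b ∈ S) :
    ∑ σ : Perm ι with σ a = t, blanketProd q (r ∘ σ) S z =
      ∑ σ : Perm ι with σ b = t, blanketProd q (r ∘ σ) S z := by
  refine sum_equiv (Equiv.mulRight (swap a b)) (by simp) fun σ _ => ?_
  rw [coe_mulRight, Perm.coe_mul, ← Function.comp_assoc,
    blanketProd_comp_of_forall_notMem q (r ∘ σ) (τ := swap a b)]
  intro j hj
  exact swap_apply_of_ne_of_ne (by rintro rfl; exact hj ha) (by rintro rfl; exact hj hb)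

end CommSemiring

theorem card_perm_apply_eq (a t : ι) : #{σ : Perm ι | σ a = t} = (Fintype.card ι - 1)! := by
  have hfib : ∀ t', #{σ : Perm ι | σ a = t'} = #{σ : Perm ι | σ a = t} := fun t' =>
    card_equiv (Equiv.mulLeft (swap t' t)) (by simp [swap_apply_eq_iff])
  have hcard : Fintype.card ι * #{σ : Perm ι | σ a = t} = (Fintype.card ι)! := by
    calc Fintype.card ι * #{σ : Perm ι | σ a = t} = ∑ t', #{σ : Perm ι | σ a = t'} := by
          simp [hfib]
      _ = (Fintype.card ι)! := by
          rw [← card_eq_sum_card_fiberwise (fun _ _ => mem_univ _), Finset.card_univ,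
            Fintype.card_perm]
  have hpos : Fintype.card ι ≠ 0 := (Fintype.card_pos_iff.2 ⟨a⟩).ne'
  rw [← mul_factorial_pred hpos] at hcard
  exact Nat.eq_of_mul_eq_mul_left (Nat.pos_of_ne_zero hpos) hcard

section Real

variable [Fintype Y]

theorem sum_guess_blanketProd_le {q : Y → ℝ} {r : ι → Y → ℝ} (hq : ∀ y, 0 ≤ q y)
    (hr : ∀ i y, 0 ≤ r i y) {β : ℝ} (hrβ : ∀ i, ∑ y, r i y = β) (t : ι)
    (A : (ι → Y) → ι) (S : Finset ι) :
    ∑ z, ∑ σ : Perm ι with σ (A z) = t, (if A z ∈ S then blanketProd q (r ∘ σ) S z else 0) ≤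
      (Fintype.card ι - 1)! * ((∑ y, q y) ^ #S * β ^ (Fintype.card ι - #S)) := by
  have hB : ∀ σ : Perm ι, ∀ z, 0 ≤ blanketProd q (r ∘ σ) S z := fun σ z =>
    mul_nonneg (prod_nonneg fun _ _ => hq _) (prod_nonneg fun _ _ => hr _ _)
  obtain rfl | ⟨b, hb⟩ := S.eq_empty_or_nonempty
  · have hβ : 0 ≤ β := hrβ t ▸ sum_nonneg fun y _ => hr t y
    simp only [notMem_empty, if_false, sum_const_zero, card_empty, pow_zero, one_mul]
    positivity
  calc ∑ z, ∑ σ : Perm ι with σ (A z) = t, (if A z ∈ S then blanketProd q (r ∘ σ) S z else 0)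
      ≤ ∑ z, ∑ σ : Perm ι with σ b = t, blanketProd q (r ∘ σ) S z := by
        refine sum_le_sum fun z _ => ?_
        by_cases hz : A z ∈ S
        · simp only [hz, if_true]
          exact (sum_perm_apply_eq_blanketProd_congr q r z t hz hb).le
        · simp only [hz, if_false, sum_const_zero]
          exact sum_nonneg fun σ _ => hB σ z
    _ = ∑ σ : Perm ι with σ b = t, (∑ y, q y) ^ #S * β ^ (Fintype.card ι - #S) := by
        rw [sum_comm]
        exact sum_congr rfl fun σ _ => sum_blanketProd q (r ∘ σ) (fun j => hrβ (σ j)) S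
    _ = _ := by rw [sum_const, card_perm_apply_eq, nsmul_eq_mul]

theorem sum_guess_prod_le {P : ι → Y → ℝ} {q : Y → ℝ} {M : ℝ} {t : ι} (hq : ∀ y, 0 ≤ q y)
    (hqP : ∀ i y, q y ≤ P i y) (hP : ∀ i, ∑ y, P i y = 1) (hM : ∀ y, P t y ≤ M * q y)
    (A : (ι → Y) → ι) :
    ∑ z, ∑ σ : Perm ι with σ (A z) = t, ∏ j, P (σ j) (z j) ≤ M * (Fintype.card ι - 1)! := by
  set α := ∑ y, q y
  set r : ι → Y → ℝ := fun i y => P i y - q y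
  have hr : ∀ i y, 0 ≤ r i y := fun i y => sub_nonneg.2 (hqP i y)
  have hrβ : ∀ i, ∑ y, r i y = 1 - α := fun i => by rw [sum_sub_distrib, hP i]
  have hM0 : 0 ≤ M := by
    have hα : 0 ≤ α := sum_nonneg fun y _ => hq y
    have : 1 ≤ M * α := by
      rw [← hP t, mul_sum]
      exact sum_le_sum fun y _ => hM y
    nlinarith
  have hdom : ∀ z, ∀ σ : Perm ι, σ (A z) = t →
      ∏ j, P (σ j) (z j) ≤ M * ∑ S, if A z ∈ S then blanketProd q (r ∘ σ) S z else 0 := by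
    intro z σ hσ
    rw [← mul_prod_erase_add_eq_sum_blanketProd, ← mul_prod_erase univ _ (mem_univ (A z)), hσ,
      ← mul_assoc]
    refine mul_le_mul_of_nonneg_right (hM _) (prod_nonneg fun j _ => ?_) |>.trans_eq ?_
    · exact (hq _).trans (hqP _ _)
    · simp [r]
  calc ∑ z, ∑ σ : Perm ι with σ (A z) = t, ∏ j, P (σ j) (z j)
      ≤ ∑ z, ∑ σ : Perm ι with σ (A z) = t,
          M * ∑ S, if A z ∈ S then blanketProd q (r ∘ σ) S z else 0 :=
        sum_le_sum fun z _ => sum_le_sum fun σ hσ => hdom z σ (mem_filter.1 hσ).2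
    _ = M * ∑ S, ∑ z, ∑ σ : Perm ι with σ (A z) = t,
          if A z ∈ S then blanketProd q (r ∘ σ) S z else 0 := by
        simp only [← mul_sum]
        congr 1
        rw [sum_comm]
        refine sum_congr rfl fun z _ => sum_comm
    _ ≤ M * ∑ S : Finset ι, (Fintype.card ι - 1)! * (α ^ #S * (1 - α) ^ (Fintype.card ι - #S)) :=
        mul_le_mul_of_nonneg_left
          (sum_le_sum fun S _ => sum_guess_blanketProd_le hq hr hrβ t A S) hM0
    _ = M * (Fintype.card ι - 1)! := by
        rw [← mul_sum, Fintype.sum_pow_mul_eq_add_pow, add_sub_cancel, one_pow, mul_one]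

theorem shuffleSuccess_eq (n : ℕ) [NeZero n] (P : Fin n → Y → ℝ) (A : (Fin n → Y) → Fin n) :
    shuffleSuccess n P A =
      (n ! : ℝ)⁻¹ * ∑ z, ∑ σ : Perm (Fin n) with σ (A z) = 0, ∏ j, P (σ j) (z j) := by
  have hshuffle : ∀ σ : Perm (Fin n), ∀ y : Fin n → Y,
      (∏ i, P i (y i)) * (if A (fun i => y (σ i)) = σ.symm 0 then 1 else 0) =
        (∏ j, P (σ j) (y (σ j))) * (if σ (A (fun i => y (σ i))) = 0 then 1 else 0) := by
    intro σ y
    simp only [Equiv.prod_comp σ (fun i => P i (y i)), eq_symm_apply]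
  rw [shuffleSuccess]
  congr 1
  calc _ = ∑ σ : Perm (Fin n), ∑ z : Fin n → Y,
        (∏ j, P (σ j) (z j)) * (if σ (A z) = 0 then 1 else 0) :=
        sum_congr rfl fun σ _ => Fintype.sum_equiv (arrowCongr σ.symm (Equiv.refl Y)) _ _
          (hshuffle σ)
    _ = _ := by
        rw [sum_comm]
        simp only [sum_filter, mul_ite, mul_one, mul_zero]

theorem shuffleSuccess_le {n : ℕ} [NeZero n] {P : Fin n → Y → ℝ} {q : Y → ℝ} {M : ℝ}
    (hq : ∀ y, 0 ≤ q y) (hqP : ∀ i y, q y ≤ P i y) (hP : ∀ i, ∑ y, P i y = 1)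
    (hM : ∀ y, P 0 y ≤ M * q y) (A : (Fin n → Y) → Fin n) :
    shuffleSuccess n P A ≤ M / n := by
  have hn : (n : ℝ) ≠ 0 := Nat.cast_ne_zero.2 (NeZero.ne n)
  have hfact : (n ! : ℝ) = n * (n - 1)! := by
    exact_mod_cast (mul_factorial_pred (NeZero.ne n)).symm
  calc shuffleSuccess n P A ≤ (n ! : ℝ)⁻¹ * (M * (n - 1)!) := by
        rw [shuffleSuccess_eq]
        gcongr
        simpa using sum_guess_prod_le hq hqP hP hM A
    _ = M / n := by
        rw [hfact]
        field_simp

end Real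

end BlanketBound

theorem stmt17_general {X Y : Type*} [Fintype X] [Fintype Y] [Nonempty X] [Nonempty Y]
    (R : X → Y → ℝ)
    (hR1 : ∀ x, ∑ y, R x y = 1)
    (x₁ : X)
    (hpos : ∀ y, 0 < Finset.univ.inf' Finset.univ_nonempty (fun x => R x y))
    (n : ℕ) [NeZero n] (x : Fin n → X) (hx1 : x 0 = x₁)
    (A : (Fin n → Y) → Fin n) :
    shuffleSuccess n (fun i => R (x i)) A ≤
      (Finset.univ.sup' Finset.univ_nonempty
        (fun y => R x₁ y / Finset.univ.inf' Finset.univ_nonempty (fun x => R x y))) / n := by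
  refine shuffleSuccess_le (fun y => (hpos y).le)
    (fun i y => Finset.inf'_le _ (Finset.mem_univ (x i))) (fun i => hR1 (x i)) (fun y => ?_) A
  rw [hx1, ← div_le_iff₀ (hpos y)]
  exact Finset.le_sup' (fun y => R x₁ y / Finset.univ.inf' Finset.univ_nonempty (fun x => R x y))
    (Finset.mem_univ y)

/-- With `M = max_y Pr[R(x₁)=y] / (min_x Pr[R(x)=y])`, every adversary in the
shuffle game whose target user has input `x₁` succeeds with probability at most
`M / n`. -/
theorem stmt17 {X Y : Type*} [Fintype X] [Fintype Y] [Nonempty X] [Nonempty Y]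
    (R : X → Y → ℝ)
    (hR0 : ∀ x y, 0 ≤ R x y) (hR1 : ∀ x, ∑ y, R x y = 1)
    (x₁ : X)
    (hpos : ∀ y, 0 < Finset.univ.inf' Finset.univ_nonempty (fun x => R x y))
    (n : ℕ) [NeZero n] (x : Fin n → X) (hx1 : x 0 = x₁)
    (A : (Fin n → Y) → Fin n) :
    shuffleSuccess n (fun i => R (x i)) A ≤
      (Finset.univ.sup' Finset.univ_nonempty
        (fun y => R x₁ y / Finset.univ.inf' Finset.univ_nonempty (fun x => R x y))) / n :=
  stmt17_general R hR1 x₁ hpos n x hx1 A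
end
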